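/- arXiv:2310.09906 — 6 statements merged into one kernel-verified Lean document; each statement's English description precedes it below -/
import Mathlib

section
/- Favard-type theorem for ℓ-LBPs: Let a_{i,j} ∈ K (1 ≤ i ≤ ℓ+1, j ≥ 0) be constants with a_{ℓ,j} ≠ 0 and a_{ℓ+1,j} ≠ 0 for all j ≥ 0, and let p_0,…,p_{ℓ−1} ∈ K[x] be monic with deg p_n = n. Define (P_n)_{n≥0} by P_n = p_n for 0 ≤ n ≤ ℓ−1 and by the (ℓ+2)-term recurrence for n ≥ ℓ (with P_{−1} = 0). Then there exists a linear functional 𝓛 : K[x,x⁻¹] → K such that (P_n)_{n≥0} is an ℓ-LBPs with respect to 𝓛; moreover, among such functionals there is exactly one satisfying 𝓛[1] = 1. -/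
/-!
Pairing the recurrence at `n = m + ℓ` with `x^{-(k+1)ℓ}` gives a linear relation among the numbers
`W n k = 𝓛[P_n x^{-kℓ}]` in which `a_{ℓ,m} W m (k+1)` occurs, so (as `a_{ℓ,m} ≠ 0`) it can be
solved for `W m (k+1)` in terms of values with smaller `k`, or equal `k` and larger `m`.
Hence the conditions `W n k = h_n δ_{nk}` for `k ≤ n` determine every `W n k`, and at
`(n, k) = (m + 1 + ℓ, m + 1)` they force `h_{m+1} = -(a_{ℓ+1,m+1} / a_{ℓ,m+1}) h_m`, with
`h_0 = 𝓛[1]`. Since the `P_n x^{-kℓ}` span `K[x, x⁻¹]`, this gives uniqueness.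
For existence, `{P_n} ∪ {P_r x^{-kℓ} : r < ℓ, k ≥ 1}` is a basis of `K[x, x⁻¹]`, so some `𝓛`
takes the forced values on it; by the recurrence (now read forwards in `n`) it then takes them
everywhere.
-/

open scoped BigOperators

/-- The `(ℓ+2)`-term recurrence
`P n = -∑_{i=1}^{ℓ-1} a i (n-ℓ) * P (n-i) + (X^ℓ - a ℓ (n-ℓ)) * P (n-ℓ)
      - a (ℓ+1) (n-ℓ) * X^ℓ * P (n-ℓ-1)` for `n ≥ ℓ`, with the convention
`P_{-1} = 0` (i.e. the last term is dropped when `n = ℓ`). -/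
def SatisfiesRec {K : Type*} [Field K] (ℓ : ℕ) (a : ℕ → ℕ → K)
    (P : ℕ → Polynomial K) : Prop :=
  ∀ n : ℕ, ℓ ≤ n →
    P n = -(∑ i ∈ Finset.Icc 1 (ℓ - 1), Polynomial.C (a i (n - ℓ)) * P (n - i))
      + (Polynomial.X ^ ℓ - Polynomial.C (a ℓ (n - ℓ))) * P (n - ℓ)
      - Polynomial.C (a (ℓ + 1) (n - ℓ)) * Polynomial.X ^ ℓ *
        (if n = ℓ then 0 else P (n - ℓ - 1))

/-- `(P n)` is an `ℓ`-LBPs with respect to the linear functional `L` on Laurent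
polynomials: each `P n` is monic of exact degree `n` and
`L (P n • x^{-kℓ}) = h n δ_{n,k}` for `0 ≤ k ≤ n` with `h n ≠ 0`. -/
def IsLBP {K : Type*} [Field K] (ℓ : ℕ) (P : ℕ → Polynomial K)
    (L : LaurentPolynomial K →ₗ[K] K) : Prop :=
  (∀ n : ℕ, (P n).Monic ∧ (P n).natDegree = n) ∧
  ∃ h : ℕ → K, ∀ n : ℕ, h n ≠ 0 ∧ ∀ k : ℕ, k ≤ n →
    L (Polynomial.toLaurent (P n) * LaurentPolynomial.T (-(k : ℤ) * ℓ)) =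
      if n = k then h n else 0


namespace LaurentBiorthogonal

open Polynomial LaurentPolynomial Finset

variable {K : Type*} [Field K]

noncomputable def monicBasis {P : ℕ → K[X]} (hP : ∀ n, (P n).Monic ∧ (P n).natDegree = n) :
    Module.Basis ℕ K K[X] :=
  Sequence.basis ⟨P, fun n => by rw [degree_eq_natDegree (hP n).1.ne_zero, (hP n).2]⟩
    fun n => by simp [(hP n).1.leadingCoeff]

@[simp]
theorem monicBasis_apply {P : ℕ → K[X]} (hP : ∀ n, (P n).Monic ∧ (P n).natDegree = n) (n : ℕ) :
    monicBasis hP n = P n :=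
  Sequence.basis_eq_self _ _ n

/-- `pairing ℓ L k (P n)` is the paper's `𝓛[P_n(x) x^{-kℓ}]`. -/
noncomputable def pairing (ℓ : ℕ) (L : K[T;T⁻¹] →ₗ[K] K) (k : ℕ) : K[X] →ₗ[K] K :=
  L ∘ₗ LinearMap.mulRight K (T (-(k : ℤ) * ℓ)) ∘ₗ toLaurentAlg.toLinearMap

variable {ℓ : ℕ} {L : K[T;T⁻¹] →ₗ[K] K}

theorem pairing_apply (k : ℕ) (f : K[X]) :
    pairing ℓ L k f = L (toLaurent f * T (-(k : ℤ) * ℓ)) :=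
  rfl

theorem pairing_zero_one : pairing ℓ L 0 1 = L 1 := by
  simp [pairing_apply]

theorem pairing_X_pow (k j : ℕ) : pairing ℓ L k (X ^ j) = L (T (j - k * ℓ)) := by
  rw [pairing_apply, toLaurent_X_pow, ← T_add, neg_mul, ← sub_eq_add_neg]

theorem pairing_succ_X_pow_mul (k : ℕ) (f : K[X]) :
    pairing ℓ L (k + 1) (X ^ ℓ * f) = pairing ℓ L k f := by
  rw [pairing_apply, pairing_apply, map_mul toLaurent, toLaurent_X_pow, mul_comm (T (ℓ : ℤ)),
    mul_assoc, ← T_add]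
  congr 3
  push_cast
  ring

theorem ext_of_pairing (hℓ : 1 ≤ ℓ) {P : ℕ → K[X]} (hP : ∀ n, (P n).Monic ∧ (P n).natDegree = n)
    {M : K[T;T⁻¹] →ₗ[K] K} (h : ∀ n k, pairing ℓ M k (P n) = pairing ℓ L k (P n)) : M = L := by
  refine (AddMonoidAlgebra.basis ℤ K).ext fun u => ?_
  obtain ⟨j, hj⟩ : ∃ j : ℕ, u = j - u.natAbs * ℓ := by
    have : (u.natAbs : ℤ) ≤ u.natAbs * ℓ :=
      le_mul_of_one_le_right (by positivity) (by exact_mod_cast hℓ)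
    exact ⟨(u + u.natAbs * ℓ).toNat, by omega⟩
  have hk : pairing ℓ M u.natAbs = pairing ℓ L u.natAbs :=
    (monicBasis hP).ext fun n => by simpa using h n u.natAbs
  change M (T u) = L (T u)
  rw [hj, ← pairing_X_pow, ← pairing_X_pow, hk]

/-- Writing `u = s - kℓ` with `k = 0` if `u ≥ 0` and `0 ≤ s < ℓ` otherwise (`Int` division rounds
down), the value on `x^u` is `φ k (X^s)`. -/
noncomputable def blockFunctional (ℓ : ℕ) (φ : ℕ → K[X] →ₗ[K] K) : K[T;T⁻¹] →ₗ[K] K :=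
  (AddMonoidAlgebra.basis ℤ K).constr K fun u =>
    φ (-(u / ℓ)).toNat (X ^ (u + (-(u / ℓ)).toNat * ℓ).toNat)

theorem blockFunctional_T {φ : ℕ → K[X] →ₗ[K] K} {k s : ℕ} (h : k = 0 ∨ s < ℓ) :
    blockFunctional ℓ φ (T (s - k * ℓ)) = φ k (X ^ s) := by
  have hdiv : (-((s - k * ℓ : ℤ) / ℓ)).toNat = k := by
    rcases h with rfl | h
    · have := Int.ediv_nonneg (Int.natCast_nonneg s) (Int.natCast_nonneg ℓ)
      simp only [CharP.cast_eq_zero, zero_mul, sub_zero]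
      omega
    · rw [sub_eq_add_neg, ← neg_mul, Int.add_mul_ediv_right _ _ (by omega),
        Int.ediv_eq_zero_of_lt (by omega) (by omega)]
      simp
  rw [blockFunctional, show (T (s - k * ℓ) : K[T;T⁻¹]) = AddMonoidAlgebra.basis ℤ K _ from rfl,
    Module.Basis.constr_basis, hdiv]
  simp

theorem pairing_blockFunctional {φ : ℕ → K[X] →ₗ[K] K} {k : ℕ} {f : K[X]}
    (h : k = 0 ∨ f.natDegree < ℓ) : pairing ℓ (blockFunctional ℓ φ) k f = φ k f := by
  rw [as_sum_range_C_mul_X_pow f, map_sum, map_sum]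
  refine sum_congr rfl fun s hs => ?_
  rw [C_mul', map_smul, map_smul, pairing_X_pow,
    blockFunctional_T (h.imp_right fun hf => by have := mem_range.mp hs; omega)]

theorem exists_pairing_eq {P : ℕ → K[X]} (hP : ∀ n, (P n).Monic ∧ (P n).natDegree = n)
    (g : ℕ → ℕ → K) :
    ∃ L : K[T;T⁻¹] →ₗ[K] K, ∀ n k, (k = 0 ∨ n < ℓ) → pairing ℓ L k (P n) = g n k := by
  refine ⟨blockFunctional ℓ fun k => (monicBasis hP).constr K (g · k), fun n k h => ?_⟩
  rw [pairing_blockFunctional (by rwa [(hP n).2]), ← monicBasis_apply hP,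
    Module.Basis.constr_basis]

/-- What pairing the recurrence at `n = m + ℓ` with `x^{-(k+1)ℓ}` gives for
`W n k = 𝓛[P_n x^{-kℓ}]`. -/
def SatisfiesPairingRec (ℓ : ℕ) (a : ℕ → ℕ → K) (W : ℕ → ℕ → K) : Prop :=
  ∀ m k, W (m + ℓ) (k + 1) =
    -(∑ i ∈ Icc 1 (ℓ - 1), a i m * W (m + ℓ - i) (k + 1)) + W m k - a ℓ m * W m (k + 1)
      - a (ℓ + 1) m * (if m = 0 then 0 else W (m - 1) k)

theorem _root_.SatisfiesRec.eq_X_pow_mul_sub {a : ℕ → ℕ → K} {P : ℕ → K[X]}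
    (hrec : SatisfiesRec ℓ a P) (m : ℕ) :
    P (m + ℓ) = X ^ ℓ * P m - ((∑ i ∈ Icc 1 (ℓ - 1), a i m • P (m + ℓ - i)) + a ℓ m • P m
      + a (ℓ + 1) m • (if m = 0 then 0 else X ^ ℓ * P (m - 1))) := by
  rw [hrec (m + ℓ) le_add_self]
  simp only [Nat.add_sub_cancel, Nat.add_eq_right, ← C_mul']
  split_ifs <;> ring

theorem _root_.SatisfiesRec.monic_natDegree (hℓ : 1 ≤ ℓ) {a : ℕ → ℕ → K} {P : ℕ → K[X]}
    (hrec : SatisfiesRec ℓ a P) (hinit : ∀ n < ℓ, (P n).Monic ∧ (P n).natDegree = n) :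
    ∀ n, (P n).Monic ∧ (P n).natDegree = n := by
  intro n
  induction n using Nat.strong_induction_on with | _ n ih =>
  rcases lt_or_ge n ℓ with hn | hn
  · exact hinit n hn
  obtain ⟨m, rfl⟩ := Nat.exists_eq_add_of_le' hn
  have hm := ih m (by omega)
  have hlead : (X ^ ℓ * P m).Monic := (monic_X_pow ℓ).mul hm.1
  have hlead_deg : (X ^ ℓ * P m).natDegree = m + ℓ := by
    rw [(monic_X_pow ℓ).natDegree_mul hm.1, natDegree_X_pow, hm.2, add_comm]
  have hmem : ∀ q : K[X], q.natDegree < m + ℓ → q ∈ degreeLT K (m + ℓ) := fun q hq =>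
    mem_degreeLT.mpr (degree_le_natDegree.trans_lt (WithBot.coe_lt_coe.mpr hq))
  obtain ⟨Q, hQ, hPQ⟩ : ∃ Q ∈ degreeLT K (m + ℓ), P (m + ℓ) = X ^ ℓ * P m - Q := by
    refine ⟨_, ?_, hrec.eq_X_pow_mul_sub m⟩
    have hP : ∀ j < m + ℓ, P j ∈ degreeLT K (m + ℓ) := fun j hj => hmem _ (by rwa [(ih j hj).2])
    refine add_mem (add_mem (Submodule.sum_mem _ fun i hi => Submodule.smul_mem _ _ (hP _ ?_))
      (Submodule.smul_mem _ _ (hP m (by omega)))) (Submodule.smul_mem _ _ ?_)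
    · have := mem_Icc.mp hi; omega
    split_ifs with hm0
    · exact zero_mem _
    refine hmem _ (natDegree_mul_le.trans_lt ?_)
    rw [natDegree_X_pow, (ih (m - 1) (by omega)).2]
    omega
  have hdeg : (-Q).degree < (X ^ ℓ * P m).degree := by
    rw [degree_neg, degree_eq_natDegree hlead.ne_zero, hlead_deg]
    exact mem_degreeLT.mp hQ
  rw [hPQ, sub_eq_add_neg]
  exact ⟨hlead.add_of_left hdeg, by rw [natDegree_add_eq_left_of_degree_lt hdeg, hlead_deg]⟩

theorem _root_.SatisfiesRec.satisfiesPairingRec {a : ℕ → ℕ → K} {P : ℕ → K[X]}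
    (hrec : SatisfiesRec ℓ a P) (L : K[T;T⁻¹] →ₗ[K] K) :
    SatisfiesPairingRec ℓ a fun n k => pairing ℓ L k (P n) := by
  intro m k
  simp only [hrec.eq_X_pow_mul_sub m]
  split_ifs <;> simp only [map_sub, map_add, map_sum, map_smul, smul_eq_mul, map_zero,
    pairing_succ_X_pow_mul] <;> ring

namespace SatisfiesPairingRec

variable {a : ℕ → ℕ → K} {W W' : ℕ → ℕ → K}

theorem ext_of_base (hℓ : 1 ≤ ℓ) (hW : SatisfiesPairingRec ℓ a W)
    (hW' : SatisfiesPairingRec ℓ a W') (h0 : ∀ n, W n 0 = W' n 0)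
    (hlt : ∀ n < ℓ, ∀ k, W n k = W' n k) : W = W' := by
  funext n k
  induction n using Nat.strong_induction_on generalizing k with | _ n ih =>
  rcases k with _ | k
  · exact h0 n
  rcases lt_or_ge n ℓ with hn | hn
  · exact hlt n hn _
  obtain ⟨m, rfl⟩ := Nat.exists_eq_add_of_le' hn
  rw [hW, hW', ih m (by omega), ih m (by omega),
    sum_congr rfl fun i hi => by rw [ih _ (by have := mem_Icc.mp hi; omega)]]
  split_ifs
  · rfl
  · rw [ih (m - 1) (by omega)]

theorem ext_of_le (hℓ : 1 ≤ ℓ) (ha : ∀ m, a ℓ m ≠ 0) (hW : SatisfiesPairingRec ℓ a W)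
    (hW' : SatisfiesPairingRec ℓ a W') (hle : ∀ n k, k ≤ n → W n k = W' n k) : W = W' := by
  funext n k
  induction k generalizing n with
  | zero => exact hle n 0 n.zero_le
  | succ k ihk =>
  induction h : k + 1 - n using Nat.strong_induction_on generalizing n with | _ d ihd =>
  rcases le_or_gt (k + 1) n with hkn | hkn
  · exact hle n _ hkn
  have e := hW n k
  rw [ihd _ (by omega) (n + ℓ) rfl, ihk n,
    sum_congr rfl fun i hi => by rw [ihd _ (by have := mem_Icc.mp hi; omega) _ rfl],
    ihk (n - 1)] at e
  refine mul_left_cancel₀ (ha n) ?_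
  linear_combination e - hW' n k

end SatisfiesPairingRec

noncomputable def norms (ℓ : ℕ) (a : ℕ → ℕ → K) : ℕ → K
  | 0 => 1
  | m + 1 => -(a (ℓ + 1) (m + 1) / a ℓ (m + 1)) * norms ℓ a m

theorem norms_ne_zero {a : ℕ → ℕ → K} (ha : ∀ m, a ℓ m ≠ 0) (ha' : ∀ m, a (ℓ + 1) m ≠ 0)
    (n : ℕ) : norms ℓ a n ≠ 0 := by
  induction n with
  | zero => exact one_ne_zero
  | succ m ih => exact mul_ne_zero (neg_ne_zero.mpr (div_ne_zero (ha' _) (ha _))) ih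

theorem eq_norms_iff {a : ℕ → ℕ → K} (ha : ∀ m, a ℓ m ≠ 0) (h : ℕ → K) :
    h = norms ℓ a ↔ h 0 = 1 ∧ ∀ m, a ℓ (m + 1) * h (m + 1) + a (ℓ + 1) (m + 1) * h m = 0 := by
  constructor
  · rintro rfl
    refine ⟨rfl, fun m => ?_⟩
    rw [norms]
    field_simp [ha]
    ring
  · rintro ⟨h0, hrel⟩
    funext n
    induction n with
    | zero => exact h0
    | succ m ih =>
      rw [norms, ← ih]
      field_simp [ha]
      linear_combination hrel m

/-- The values `𝓛[P_m x^{-kℓ}]` forced on an `ℓ`-LBPs with `𝓛[1] = 1`: for `k > m`, solve the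
pairing recurrence at `(m, k - 1)` for its `a ℓ m` term (junk `0` if `ℓ = 0`). -/
noncomputable def gram (ℓ : ℕ) (a : ℕ → ℕ → K) (m k : ℕ) : K :=
  if k ≤ m then (if m = k then norms ℓ a m else 0)
  else if ℓ = 0 then 0
  else (gram ℓ a m (k - 1) - gram ℓ a (m + ℓ) k
      - ∑ i ∈ (Icc 1 (ℓ - 1)).attach, a i m * gram ℓ a (m + ℓ - i) k
      - a (ℓ + 1) m * (if m = 0 then 0 else gram ℓ a (m - 1) (k - 1))) / a ℓ m
termination_by (k, k - m)
decreasing_by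
  all_goals first
    | decreasing_tactic
    | exact Prod.Lex.right _ (by have := mem_Icc.mp i.2; omega)

variable {a : ℕ → ℕ → K} {m k : ℕ}

theorem gram_of_le (h : k ≤ m) : gram ℓ a m k = if m = k then norms ℓ a m else 0 := by
  rw [gram, if_pos h]

theorem gram_of_lt (hℓ : 1 ≤ ℓ) (ha : a ℓ m ≠ 0) (h : m < k) :
    a ℓ m * gram ℓ a m k = gram ℓ a m (k - 1) - gram ℓ a (m + ℓ) k
      - ∑ i ∈ Icc 1 (ℓ - 1), a i m * gram ℓ a (m + ℓ - i) k
      - a (ℓ + 1) m * (if m = 0 then 0 else gram ℓ a (m - 1) (k - 1)) := by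
  conv_lhs => rw [gram, if_neg h.not_ge, if_neg (by omega),
    sum_attach (Icc 1 (ℓ - 1)) fun i => a i m * gram ℓ a (m + ℓ - i) k]
  exact mul_div_cancel₀ _ ha

theorem gram_satisfiesPairingRec (hℓ : 1 ≤ ℓ) (ha : ∀ m, a ℓ m ≠ 0) :
    SatisfiesPairingRec ℓ a (gram ℓ a) := by
  intro m k
  rcases lt_or_ge m (k + 1) with hmk | hkm
  · have h := gram_of_lt hℓ (ha m) hmk
    rw [Nat.add_sub_cancel] at h
    linear_combination h
  have hsum : ∑ i ∈ Icc 1 (ℓ - 1), a i m * gram ℓ a (m + ℓ - i) (k + 1) = 0 :=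
    sum_eq_zero fun i hi => by
      have := mem_Icc.mp hi
      rw [gram_of_le (by omega), if_neg (by omega), mul_zero]
  rw [hsum]
  rcases eq_or_lt_of_le hkm with rfl | hlt
  · simp (disch := omega) only [gram_of_le, if_neg, ↓reduceIte, Nat.add_sub_cancel]
    linear_combination ((eq_norms_iff ha _).mp rfl).2 k
  · simp (disch := omega) only [gram_of_le, if_neg]
    ring

theorem _root_.IsLBP.pairing_eq_gram (hℓ : 1 ≤ ℓ) (ha : ∀ m, a ℓ m ≠ 0) {P : ℕ → K[X]}
    (hrec : SatisfiesRec ℓ a P) {M : K[T;T⁻¹] →ₗ[K] K} (hM : IsLBP ℓ P M) (hM1 : M 1 = 1) :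
    (fun n k => pairing ℓ M k (P n)) = gram ℓ a := by
  obtain ⟨hP, h, hh⟩ := hM
  have hW := hrec.satisfiesPairingRec M
  have hdiag : ∀ n k, k ≤ n → pairing ℓ M k (P n) = if n = k then h n else 0 :=
    fun n k => (hh n).2 k
  have hnorm : h = norms ℓ a := by
    refine (eq_norms_iff ha h).mpr ⟨?_, fun m => ?_⟩
    · have h0 := hdiag 0 0 le_rfl
      rwa [if_pos rfl, (hP 0).1.natDegree_eq_zero.mp (hP 0).2, pairing_zero_one, hM1,
        eq_comm] at h0
    have e := hW (m + 1) m
    beta_reduce at e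
    rw [sum_eq_zero fun i hi => by
      have := mem_Icc.mp hi
      rw [hdiag _ _ (by omega), if_neg (by omega), mul_zero]] at e
    simp (disch := omega) only [hdiag, if_neg, ↓reduceIte, Nat.add_sub_cancel] at e
    linear_combination e
  exact hW.ext_of_le hℓ ha (gram_satisfiesPairingRec hℓ ha) fun n k hk => by
    rw [hdiag n k hk, gram_of_le hk, hnorm]

end LaurentBiorthogonal

open LaurentBiorthogonal in
/-- **Favard-type theorem for ℓ-LBPs.** If `P` is defined by the `(ℓ+2)`-term
recurrence with coefficients satisfying `a ℓ j ≠ 0` and `a (ℓ+1) j ≠ 0`, from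
monic initial polynomials of exact degrees `0, …, ℓ-1`, then some linear
functional makes `P` an `ℓ`-LBPs, and among such functionals there is exactly
one with `L 1 = 1`. -/
theorem favard_type_theorem {K : Type*} [Field K] (ℓ : ℕ) (hℓ : 1 ≤ ℓ)
    (a : ℕ → ℕ → K) (haℓ : ∀ j : ℕ, a ℓ j ≠ 0) (haℓ1 : ∀ j : ℕ, a (ℓ + 1) j ≠ 0)
    (P : ℕ → Polynomial K)
    (hinit : ∀ n : ℕ, n < ℓ → (P n).Monic ∧ (P n).natDegree = n)
    (hrec : SatisfiesRec ℓ a P) :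
    (∃ L : LaurentPolynomial K →ₗ[K] K, IsLBP ℓ P L) ∧
    (∃! L : LaurentPolynomial K →ₗ[K] K, IsLBP ℓ P L ∧ L 1 = 1) := by
  have hP := hrec.monic_natDegree hℓ hinit
  obtain ⟨L, hL⟩ := exists_pairing_eq (ℓ := ℓ) hP (gram ℓ a)
  have hLgram : (fun n k => pairing ℓ L k (P n)) = gram ℓ a :=
    (hrec.satisfiesPairingRec L).ext_of_base hℓ (gram_satisfiesPairingRec hℓ haℓ)
      (fun n => hL n 0 (Or.inl rfl)) fun n hn k => hL n k (Or.inr hn)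
  have hLBP : IsLBP ℓ P L := ⟨hP, norms ℓ a, fun n => ⟨norms_ne_zero haℓ haℓ1 n,
    fun k hk => (congr_fun₂ hLgram n k).trans (gram_of_le hk)⟩⟩
  have hL1 : L 1 = 1 := by
    rw [← pairing_zero_one, ← (hP 0).1.natDegree_eq_zero.mp (hP 0).2, congr_fun₂ hLgram 0 0,
      gram_of_le le_rfl, if_pos rfl, norms]
  refine ⟨⟨L, hLBP⟩, L, ⟨hLBP, hL1⟩, fun M ⟨hM, hM1⟩ => ext_of_pairing hℓ hP fun n k => ?_⟩
  rw [congr_fun₂ (hM.pairing_eq_gram hℓ haℓ hrec hM1) n k, congr_fun₂ hLgram n k]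
end

section
/- Let a_{i,j} ∈ K (1 ≤ i ≤ ℓ+1, j ≥ 0) satisfy a_{ℓ,j} ≠ 0 and a_{ℓ+1,j} ≠ 0 for all j, let p_0,…,p_{ℓ−1} ∈ K[x] be monic with deg p_n = n, and let (P_n)_{n≥0} be defined by P_n = p_n for 0 ≤ n ≤ ℓ−1 and the (ℓ+2)-term recurrence for n ≥ ℓ (with P_{−1} = 0). Then for every k ≥ 0, the ℓ×ℓ determinant det( [x^j]P_{k+i}(x) )_{i,j=0}^{ℓ−1} equals (−1)^{kℓ} ∏_{i=0}^{k−1} a_{ℓ,i}, where [x^j]Q denotes the coefficient of x^j in the polynomial Q. -/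
open scoped BigOperators

/-!
Below degree `ℓ` the terms carrying `X ^ ℓ` drop out of the recurrence, so the vectors of the first
`ℓ` coefficients of the `P n` satisfy a linear recurrence of order `ℓ` whose coefficient at the
oldest term is `-a ℓ n`. Shifting the window of `ℓ` consecutive rows by one step therefore rotates
the rows (sign `(-1) ^ (ℓ - 1)`) and replaces the oldest row by a combination of the others and
`-a ℓ k` times itself, multiplying the determinant by `(-1) ^ ℓ * a ℓ k`. The initial window is
lower unitriangular.
-/

open Polynomial

theorem Matrix.det_shift_of_linear_recurrence {R : Type*} [CommRing R] {m : ℕ}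
    (r : ℕ → Fin (m + 1) → R) (c : Fin (m + 1) → R) (k : ℕ)
    (hr : r (k + (m + 1)) = ∑ i, c i • r (k + i)) :
    (Matrix.of fun i : Fin (m + 1) => r (k + 1 + i)).det =
      (-1) ^ m * c 0 * (Matrix.of fun i : Fin (m + 1) => r (k + i)).det := by
  set A := Matrix.of fun i : Fin (m + 1) => r (k + i)
  set N := A.submatrix (finRotate (m + 1)) id
  have hlast : ∑ i, c (finRotate (m + 1) i) • N i = r (k + 1 + m) := by
    rw [add_assoc, add_comm 1 m, hr]
    exact Equiv.sum_comp (finRotate (m + 1)) fun i => c i • A i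
  have hshift : Matrix.of (fun i : Fin (m + 1) => r (k + 1 + i)) =
      N.updateRow (Fin.last m) (∑ i, c (finRotate (m + 1) i) • N i) := by
    ext i : 1
    rcases eq_or_ne i (Fin.last m) with rfl | hi
    · rw [Matrix.updateRow_self, hlast]
      rfl
    · rw [Matrix.updateRow_ne hi]
      simp [N, A, Fin.val_add_one_of_lt (Fin.lt_last_iff_ne_last.2 hi), add_assoc,
        add_comm 1 (i : ℕ)]
  rw [hshift, Matrix.det_updateRow_sum, Matrix.det_permute, sign_finRotate]
  simp only [finRotate_last, smul_eq_mul, add_tsub_cancel_right, Units.val_pow_eq_pow_val,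
    Units.val_neg, Units.val_one, Int.cast_pow, Int.cast_neg, Int.cast_one]
  ring

theorem Polynomial.det_coeff_eq_one_of_monic_natDegree_eq {R : Type*} [CommRing R] (ℓ : ℕ)
    (Q : ℕ → R[X]) (hQ : ∀ n : ℕ, n < ℓ → (Q n).Monic ∧ (Q n).natDegree = n) :
    (Matrix.of fun i j : Fin ℓ => (Q i).coeff j).det = 1 := by
  rw [Matrix.det_of_isLowerTriangular]
  · refine Finset.prod_eq_one fun i _ => ?_
    obtain ⟨hmonic, hdeg⟩ := hQ i i.2
    simpa [hdeg] using hmonic.coeff_natDegree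
  · intro i j hij
    exact coeff_eq_zero_of_natDegree_lt ((hQ i i.2).2.trans_lt hij)

theorem SatisfiesRec.coeff_add_eq_sum {K : Type*} [Field K] {ℓ : ℕ} {a : ℕ → ℕ → K}
    {P : ℕ → K[X]} (hrec : SatisfiesRec ℓ a P) (k : ℕ) {j : ℕ} (hj : j < ℓ) :
    (P (k + ℓ)).coeff j = ∑ i : Fin ℓ, -a (ℓ - i) k * (P (k + i)).coeff j := by
  have hX : ∀ Q : K[X], (X ^ ℓ * Q).coeff j = 0 := fun Q => by
    simp [coeff_X_pow_mul', hj.not_ge]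
  have htrunc : (P (k + ℓ)).coeff j =
      -∑ i ∈ Finset.Icc 1 (ℓ - 1), a i k * (P (k + ℓ - i)).coeff j - a ℓ k * (P k).coeff j := by
    rw [hrec (k + ℓ) (Nat.le_add_left ℓ k), mul_comm (C _) (X ^ ℓ), mul_assoc, sub_mul]
    simp only [coeff_sub, coeff_add, coeff_neg, hX, finsetSum_coeff, coeff_C_mul,
      Nat.add_sub_cancel]
    ring
  obtain ⟨m, rfl⟩ : ∃ m, ℓ = m + 1 := ⟨ℓ - 1, by omega⟩
  have hreflect : ∑ i ∈ Finset.Icc 1 m, a i k * (P (k + (m + 1) - i)).coeff j =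
      ∑ i ∈ Finset.range m, a (m + 1 - (i + 1)) k * (P (k + (i + 1))).coeff j := by
    refine Finset.sum_nbij' (m - ·) (m - ·) ?_ ?_ ?_ ?_ ?_
    all_goals intro i hi; simp only [Finset.mem_Icc, Finset.mem_range] at hi ⊢
    any_goals omega
    rw [show m + 1 - (m - i + 1) = i by omega, show k + (m + 1) - i = k + (m - i + 1) by omega]
  rw [htrunc, Fin.sum_univ_eq_sum_range (fun i => -a (m + 1 - i) k * (P (k + i)).coeff j),
    Finset.sum_range_succ', Nat.add_sub_cancel, hreflect]
  simp only [Nat.reduceSubDiff, neg_mul, Finset.sum_neg_distrib, tsub_zero, add_zero]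
  ring

theorem det_coeff_eq_general {K : Type*} [Field K] (ℓ : ℕ) (hℓ : 1 ≤ ℓ)
    (a : ℕ → ℕ → K)
    (P : ℕ → Polynomial K)
    (hinit : ∀ n : ℕ, n < ℓ → (P n).Monic ∧ (P n).natDegree = n)
    (hrec : SatisfiesRec ℓ a P) :
    ∀ k : ℕ,
      Matrix.det (fun i j : Fin ℓ => (P (k + (i : ℕ))).coeff (j : ℕ)) =
        (-1 : K) ^ (k * ℓ) * ∏ i ∈ Finset.range k, a ℓ i := by
  obtain ⟨m, rfl⟩ : ∃ m, ℓ = m + 1 := ⟨ℓ - 1, by omega⟩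
  intro k
  induction k with
  | zero =>
    simp only [zero_add, zero_mul, pow_zero, Finset.prod_range_zero, mul_one]
    exact det_coeff_eq_one_of_monic_natDegree_eq (m + 1) P hinit
  | succ k ih =>
    have hrow : (fun j : Fin (m + 1) => (P (k + (m + 1))).coeff j) =
        ∑ i : Fin (m + 1), -a (m + 1 - i) k • fun j : Fin (m + 1) => (P (k + i)).coeff j := by
      ext j
      simpa using hrec.coeff_add_eq_sum k j.2
    calc _ = (-1) ^ m * -a (m + 1) k *
          ((-1 : K) ^ (k * (m + 1)) * ∏ i ∈ Finset.range k, a (m + 1) i) := by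
          rw [← ih]
          exact Matrix.det_shift_of_linear_recurrence
            (fun (n : ℕ) (j : Fin (m + 1)) => (P n).coeff j) _ k hrow
      _ = _ := by
          rw [Finset.prod_range_succ]
          ring

/-- For `P` defined by the `(ℓ+2)`-term recurrence from monic initial
polynomials of degrees `0,…,ℓ-1`, the determinant
`det([x^j] P_{k+i})_{i,j=0}^{ℓ-1}` equals `(-1)^{kℓ} ∏_{i=0}^{k-1} a ℓ i`. -/
theorem det_coeff_eq {K : Type*} [Field K] (ℓ : ℕ) (hℓ : 1 ≤ ℓ)
    (a : ℕ → ℕ → K) (haℓ : ∀ j : ℕ, a ℓ j ≠ 0) (haℓ1 : ∀ j : ℕ, a (ℓ + 1) j ≠ 0)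
    (P : ℕ → Polynomial K)
    (hinit : ∀ n : ℕ, n < ℓ → (P n).Monic ∧ (P n).natDegree = n)
    (hrec : SatisfiesRec ℓ a P) :
    ∀ k : ℕ,
      Matrix.det (fun i j : Fin ℓ => (P (k + (i : ℕ))).coeff (j : ℕ)) =
        (-1 : K) ^ (k * ℓ) * ∏ i ∈ Finset.range k, a ℓ i :=
  det_coeff_eq_general ℓ hℓ a P hinit hrec
end

section
/- Let (P_n)_{n≥0} be the primitive sequence defined by the (ℓ+2)-term recurrence with P_n(x) = x^n for 0 ≤ n ≤ ℓ−1, and let S be an ℓ×ℓ lower triangular matrix over K with all diagonal entries equal to 1. Let (P̃_n)_{n≥0} satisfy the same recurrence with the same coefficients, with initial polynomials given by (P̃_0, P̃_1, …, P̃_{ℓ−1})ᵗ = S·(1, x, …, x^{ℓ−1})ᵗ. Let (μ_n)_{n∈ℤ} and (μ̃_n)_{n∈ℤ} be the moments μ_n = 𝓛[x^n], μ̃_n = 𝓛̃[x^n] of the unique linear functionals 𝓛, 𝓛̃ with 𝓛[1] = 𝓛̃[1] = 1 making (P_n) and (P̃_n) respectively ℓ-LBPs. Then for every m ∈ ℤ,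 the column vector (μ̃_{mℓ}, μ̃_{mℓ+1}, …, μ̃_{mℓ+ℓ−1})ᵗ equals S⁻¹·(μ_{mℓ}, μ_{mℓ+1}, …, μ_{mℓ+ℓ−1})ᵗ. -/
/-!
Let `Φ` be the `K`-linear map on Laurent polynomials sending `x ^ (v + ℓ t)`, `0 ≤ v < ℓ`, to
`P̃_v · x ^ (ℓ t)`. It commutes with multiplication by `x ^ ℓ` and sends `P_v = x ^ v` to `P̃_v`
for `v < ℓ`, so the common recurrence gives `Φ P_n = P̃_n` for all `n`. Hence `𝓛̃ ∘ Φ` satisfies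
the orthogonality relations of `(P_n)` and takes the value `1` at `1`, so it is `𝓛`; evaluating
at `x ^ (m ℓ + i)` gives `μ_{mℓ+i} = ∑_j S_{ij} μ̃_{mℓ+j}`.

Uniqueness of `𝓛`: a functional `L` with `L[1] = 0` and `L[P_n x^{-kℓ}] = 0` for `k < n` vanishes
on `K[x]`, as the `P_n` have every degree. If it vanishes on `x^{-kℓ} K[x]`, then
`n ↦ L[P_n x^{-(k+1)ℓ}]` satisfies the recurrence reduced modulo `x ^ ℓ`, whose last coefficient
`a_ℓ` is nonzero, and vanishes for `n > k + 1`; running the recurrence backwards it vanishes for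
all `n`, in particular at `P_v = x ^ v`, `v < ℓ`, so `L` vanishes on `x^{-(k+1)ℓ} K[x]`.
-/

open scoped BigOperators

open Polynomial LaurentPolynomial Finset

theorem eq_zero_of_map_eq_zero_of_monic {R M : Type*} [CommRing R] [AddCommGroup M] [Module R M]
    {P : ℕ → R[X]} (hP : ∀ n, (P n).Monic ∧ (P n).natDegree = n) {φ : R[X] →ₗ[R] M}
    (h : ∀ n, φ (P n) = 0) : φ = 0 := by
  have hX : ∀ d, φ (X ^ d) = 0 := by
    intro d
    induction d using Nat.strong_induction_on with
    | _ d ih =>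
      have hPd := (hP d).1.as_sum
      rw [(hP d).2] at hPd
      rw [eq_sub_of_add_eq hPd.symm, map_sub, h, map_sum]
      simp only [C_mul', map_smul, zero_sub, neg_eq_zero]
      exact Finset.sum_eq_zero fun i hi => by rw [ih i (mem_range.mp hi), smul_zero]
  refine Polynomial.lhom_ext' fun d => LinearMap.ext_ring ?_
  simpa [← C_mul_X_pow_eq_monomial] using hX d

section Recurrence

variable {K : Type*} [Field K] {ℓ : ℕ} {a : ℕ → ℕ → K}

theorem eq_zero_of_rec_of_eventually_eq_zero (hℓ : 0 < ℓ) (haℓ : ∀ j, a ℓ j ≠ 0) {g : ℕ → K}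
    (hg : ∀ n, ℓ ≤ n →
      g n = -(∑ i ∈ Icc 1 (ℓ - 1), a i (n - ℓ) * g (n - i)) - a ℓ (n - ℓ) * g (n - ℓ))
    {N : ℕ} (hN : ∀ n, N ≤ n → g n = 0) (n : ℕ) : g n = 0 := by
  suffices ∀ j n, N ≤ n + j → g n = 0 from this N n (by omega)
  intro j
  induction j with
  | zero => exact hN
  | succ j ih =>
    intro n hn
    by_cases hnj : N ≤ n + j
    · exact ih n hnj
    have hrec := hg (n + ℓ) (by omega)
    rw [ih (n + ℓ) (by omega), Nat.add_sub_cancel,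
      Finset.sum_eq_zero fun i hi => by rw [ih _ (by rw [mem_Icc] at hi; omega), mul_zero]] at hrec
    simpa [haℓ n] using hrec

theorem SatisfiesRec.map_eq_of_map_X_pow_mul_eq_zero {P : ℕ → K[X]} (hP : SatisfiesRec ℓ a P)
    {φ : K[X] →ₗ[K] K} (hφ : ∀ p, φ (X ^ ℓ * p) = 0) {n : ℕ} (hn : ℓ ≤ n) :
    φ (P n) =
      -(∑ i ∈ Icc 1 (ℓ - 1), a i (n - ℓ) * φ (P (n - i))) - a ℓ (n - ℓ) * φ (P (n - ℓ)) := by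
  rw [hP n hn, sub_mul, mul_assoc, mul_left_comm]
  simp only [map_add, map_sub, map_neg, map_sum, C_mul', map_smul, hφ, smul_eq_mul]
  ring

theorem SatisfiesRec.eq_zero_of_map_eventually_eq_zero (hℓ : 0 < ℓ) (haℓ : ∀ j, a ℓ j ≠ 0)
    {P : ℕ → K[X]} (hP_init : ∀ n, n < ℓ → P n = X ^ n) (hP : SatisfiesRec ℓ a P)
    {φ : K[X] →ₗ[K] K} (hφ : ∀ p, φ (X ^ ℓ * p) = 0) {N : ℕ} (hN : ∀ n, N ≤ n → φ (P n) = 0) :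
    φ = 0 := by
  have hPn := eq_zero_of_rec_of_eventually_eq_zero hℓ haℓ
    (fun n hn => hP.map_eq_of_map_X_pow_mul_eq_zero hφ hn) hN
  refine Polynomial.lhom_ext' fun d => LinearMap.ext_ring ?_
  suffices φ (X ^ d) = 0 by simpa [← C_mul_X_pow_eq_monomial] using this
  rcases lt_or_ge d ℓ with hd | hd
  · rw [← hP_init d hd, hPn]
  · rw [← Nat.add_sub_cancel' hd, pow_add, hφ]

theorem SatisfiesRec.map_toLaurent_eq (hℓ : 0 < ℓ)
    {P Q : ℕ → K[X]} (hP : SatisfiesRec ℓ a P) (hQ : SatisfiesRec ℓ a Q)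
    {Φ : K[T;T⁻¹] →ₗ[K] K[T;T⁻¹]} (hΦ : ∀ f, Φ (T ℓ * f) = T ℓ * Φ f)
    (hinit : ∀ n, n < ℓ → Φ (toLaurent (P n)) = toLaurent (Q n)) (n : ℕ) :
    Φ (toLaurent (P n)) = toLaurent (Q n) := by
  induction n using Nat.strong_induction_on with
  | _ n ih =>
    rcases lt_or_ge n ℓ with hn | hn
    · exact hinit n hn
    rw [hP n hn, hQ n hn]
    simp only [map_add, map_sub, map_neg, map_sum, map_mul toLaurent, toLaurent_C, toLaurent_X_pow,
      sub_mul, mul_assoc, ← LaurentPolynomial.smul_eq_C_mul, map_smul, hΦ, apply_ite toLaurent,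
      apply_ite Φ, map_zero]
    rw [Finset.sum_congr rfl fun i hi => by rw [ih (n - i) (by rw [mem_Icc] at hi; omega)],
      ih (n - ℓ) (by omega)]
    split_ifs
    · rfl
    · rw [ih (n - ℓ - 1) (by omega)]

end Recurrence

section Uniqueness

variable {K : Type*} [Field K]

noncomputable def restrictMulT (L : K[T;T⁻¹] →ₗ[K] K) (s : ℤ) : K[X] →ₗ[K] K :=
  L ∘ₗ LinearMap.mulRight K (T s) ∘ₗ (toLaurentAlg : K[X] →ₐ[K] K[T;T⁻¹]).toLinearMap

@[simp]
theorem restrictMulT_apply (L : K[T;T⁻¹] →ₗ[K] K) (s : ℤ) (p : K[X]) :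
    restrictMulT L s p = L (toLaurent p * T s) := rfl

theorem SatisfiesRec.eq_zero_of_orthogonal {ℓ : ℕ} (hℓ : 0 < ℓ) {a : ℕ → ℕ → K}
    (haℓ : ∀ j, a ℓ j ≠ 0) {P : ℕ → K[X]} (hP_init : ∀ n, n < ℓ → P n = X ^ n)
    (hP : SatisfiesRec ℓ a P) (hmonic : ∀ n, (P n).Monic ∧ (P n).natDegree = n)
    {L : K[T;T⁻¹] →ₗ[K] K} (hL1 : L 1 = 0)
    (horth : ∀ n k : ℕ, k < n → L (toLaurent (P n) * T (-(k : ℤ) * ℓ)) = 0) : L = 0 := by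
  have hblock : ∀ k : ℕ, restrictMulT L (-(k : ℤ) * ℓ) = 0 := by
    intro k
    induction k with
    | zero =>
      refine eq_zero_of_map_eq_zero_of_monic hmonic fun n => ?_
      rcases Nat.eq_zero_or_pos n with rfl | hn
      · simpa [hP_init 0 hℓ] using hL1
      · simpa using horth n 0 hn
    | succ k ih =>
      refine hP.eq_zero_of_map_eventually_eq_zero hℓ haℓ hP_init (fun p => ?_) (N := k + 2)
        fun n hn => ?_
      · have := LinearMap.congr_fun ih p
        simp only [restrictMulT_apply, LinearMap.zero_apply] at this ⊢
        rw [map_mul toLaurent, toLaurent_X_pow, mul_comm (T _), mul_T_assoc, ← this]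
        congr 3; push_cast; ring
      · exact horth n (k + 1) (by omega)
  refine (AddMonoidAlgebra.basis ℤ K).ext fun d => ?_
  have hd : 0 ≤ d + d.natAbs * ℓ := by
    have : (d.natAbs : ℤ) ≤ d.natAbs * ℓ :=
      le_mul_of_one_le_right (by positivity) (by exact_mod_cast hℓ)
    omega
  have := LinearMap.congr_fun (hblock d.natAbs) (X ^ (d + d.natAbs * ℓ).toNat)
  rw [restrictMulT_apply, toLaurent_X_pow, ← T_add, Int.toNat_of_nonneg hd] at this
  simpa using this

end Uniqueness

section BlockMap

variable {K : Type*} [Field K] {ℓ : ℕ}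

/-- The `K`-linear map sending `T ^ (v + ℓ * t)`, for `0 ≤ v < ℓ`, to `q v * T ^ (ℓ * t)`. -/
noncomputable def blockMap (ℓ : ℕ) (q : ℕ → K[X]) : K[T;T⁻¹] →ₗ[K] K[T;T⁻¹] :=
  (AddMonoidAlgebra.basis ℤ K).constr K fun d => toLaurent (q (d % ℓ).toNat) * T (ℓ * (d / ℓ))

theorem blockMap_T_add_mul (q : ℕ → K[X]) {v : ℕ} (hv : v < ℓ) (t : ℤ) :
    blockMap ℓ q (T (v + ℓ * t)) = toLaurent (q v) * T (ℓ * t) := by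
  have hdiv : ((v : ℤ) + ℓ * t) / ℓ = t := by
    rw [Int.add_mul_ediv_left _ t (by omega), Int.ediv_eq_zero_of_lt (by omega) (by omega),
      zero_add]
  have hmod : ((v : ℤ) + ℓ * t) % ℓ = v := by
    rw [Int.add_mul_emod_self_left, Int.emod_eq_of_lt (by omega) (by omega)]
  change (AddMonoidAlgebra.basis ℤ K).constr K _ (AddMonoidAlgebra.basis ℤ K _) = _
  rw [Module.Basis.constr_basis, hdiv, hmod, Int.toNat_natCast]

theorem blockMap_T_mul (hℓ : 0 < ℓ) (q : ℕ → K[X]) (t : ℤ) (f : K[T;T⁻¹]) :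
    blockMap ℓ q (T (ℓ * t) * f) = T (ℓ * t) * blockMap ℓ q f := by
  suffices blockMap ℓ q ∘ₗ LinearMap.mulLeft K (T (ℓ * t)) =
      LinearMap.mulLeft K (T (ℓ * t)) ∘ₗ blockMap ℓ q from LinearMap.congr_fun this f
  refine (AddMonoidAlgebra.basis ℤ K).ext fun d => ?_
  obtain ⟨v, hv, s, rfl⟩ : ∃ v < ℓ, ∃ s : ℤ, d = v + ℓ * s := by
    have := Int.emod_nonneg d (b := ℓ) (by omega)
    have := Int.emod_lt_of_pos d (b := ℓ) (by omega)
    exact ⟨(d % ℓ).toNat, by omega, d / ℓ, by rw [Int.toNat_of_nonneg ‹_›, Int.emod_add_mul_ediv]⟩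
  have hshift : T (ℓ * t) * T (v + ℓ * s) = (T (v + ℓ * (t + s)) : K[T;T⁻¹]) := by
    rw [← T_add]; ring_nf
  simp only [LinearMap.comp_apply, LinearMap.mulLeft_apply, AddMonoidAlgebra.basis_apply]
  rw [← T, hshift, blockMap_T_add_mul q hv, blockMap_T_add_mul q hv, mul_left_comm, ← T_add,
    mul_add]

end BlockMap

theorem moments_of_equivalent_LBP_general {K : Type*} [Field K] (ℓ : ℕ) (hℓ : 1 ≤ ℓ)
    (a : ℕ → ℕ → K) (haℓ : ∀ j : ℕ, a ℓ j ≠ 0)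
    (P Pt : ℕ → Polynomial K)
    (S : Matrix (Fin ℓ) (Fin ℓ) K)
    (hS_lower : ∀ i j : Fin ℓ, i < j → S i j = 0)
    (hS_diag : ∀ i : Fin ℓ, S i i = 1)
    (hP_init : ∀ n : ℕ, n < ℓ → P n = Polynomial.X ^ n)
    (hP_rec : SatisfiesRec ℓ a P)
    (hPt_init : ∀ (n : ℕ) (hn : n < ℓ),
      Pt n = ∑ j : Fin ℓ, Polynomial.C (S ⟨n, hn⟩ j) * Polynomial.X ^ (j : ℕ))
    (hPt_rec : SatisfiesRec ℓ a Pt)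
    (L Lt : LaurentPolynomial K →ₗ[K] K)
    (hL : IsLBP ℓ P L) (hL1 : L 1 = 1)
    (hLt : IsLBP ℓ Pt Lt) (hLt1 : Lt 1 = 1)
    (μ μt : ℤ → K)
    (hμ : ∀ n : ℤ, μ n = L (LaurentPolynomial.T n))
    (hμt : ∀ n : ℤ, μt n = Lt (LaurentPolynomial.T n)) :
    ∀ m : ℤ, (fun i : Fin ℓ => μt (m * ℓ + (i : ℕ))) =
      S⁻¹.mulVec (fun i : Fin ℓ => μ (m * ℓ + (i : ℕ))) := by
  obtain ⟨hP_monic, _, hh⟩ := hL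
  obtain ⟨hPt_monic, _, hht⟩ := hLt
  have hΦP : ∀ n, blockMap ℓ Pt (toLaurent (P n)) = toLaurent (Pt n) :=
    hP_rec.map_toLaurent_eq hℓ hPt_rec (by simpa using blockMap_T_mul hℓ Pt 1) fun n hn => by
      simpa [hP_init n hn] using blockMap_T_add_mul Pt hn 0
  have hLΦ : L = Lt ∘ₗ blockMap ℓ Pt := by
    rw [← sub_eq_zero]
    refine hP_rec.eq_zero_of_orthogonal hℓ haℓ hP_init hP_monic ?_ fun n k hk => ?_
    · have hPt0 : Pt 0 = 1 := eq_one_of_monic_natDegree_zero (hPt_monic 0).1 (hPt_monic 0).2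
      have hΦ1 : blockMap ℓ Pt 1 = 1 := by simpa [hP_init 0 hℓ, hPt0] using hΦP 0
      simp [hΦ1, hL1, hLt1]
    · have hΦPT : blockMap ℓ Pt (toLaurent (P n) * T (-k * ℓ)) = toLaurent (Pt n) * T (-k * ℓ) := by
        rw [mul_comm, show -(k : ℤ) * ℓ = ℓ * -k by ring, blockMap_T_mul hℓ, hΦP, mul_comm]
      rw [LinearMap.sub_apply, LinearMap.comp_apply, hΦPT, (hh n).2 k hk.le, (hht n).2 k hk.le,
        if_neg hk.ne', if_neg hk.ne', sub_zero]
  have hblock (m : ℤ) :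
      (fun i : Fin ℓ => μ (m * ℓ + (i : ℕ))) = S.mulVec fun j : Fin ℓ => μt (m * ℓ + (j : ℕ)) := by
    ext i
    rw [hμ, hLΦ, LinearMap.comp_apply, show m * ℓ + (i : ℕ) = ((i : ℕ) : ℤ) + ℓ * m by ring,
      blockMap_T_add_mul Pt i.isLt, hPt_init i i.isLt]
    simp only [map_sum, Finset.sum_mul, toLaurent_C_mul_X_pow, Matrix.mulVec, dotProduct, hμt]
    refine Finset.sum_congr rfl fun j _ => ?_
    rw [mul_assoc, ← T_add, ← LaurentPolynomial.smul_eq_C_mul, map_smul, smul_eq_mul, Fin.eta,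
      add_comm, mul_comm (ℓ : ℤ)]
  have hS : IsUnit S.det := by
    rw [Matrix.det_of_isLowerTriangular S fun i j hij => hS_lower i j hij]
    simp [hS_diag]
  intro m
  rw [hblock, Matrix.mulVec_mulVec, Matrix.nonsing_inv_mul S hS, Matrix.one_mulVec]

/-- The moments of an `ℓ`-LBPs equivalent (same recurrence coefficients) to a
primitive one, with initial polynomials obtained from the monomials by a
unitriangular matrix `S`, are obtained from the primitive moments by `S⁻¹`,
`ℓ` consecutive moments at a time. -/
theorem moments_of_equivalent_LBP {K : Type*} [Field K] (ℓ : ℕ) (hℓ : 1 ≤ ℓ)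
    (a : ℕ → ℕ → K) (haℓ : ∀ j : ℕ, a ℓ j ≠ 0) (haℓ1 : ∀ j : ℕ, a (ℓ + 1) j ≠ 0)
    (P Pt : ℕ → Polynomial K)
    (S : Matrix (Fin ℓ) (Fin ℓ) K)
    (hS_lower : ∀ i j : Fin ℓ, i < j → S i j = 0)
    (hS_diag : ∀ i : Fin ℓ, S i i = 1)
    (hP_init : ∀ n : ℕ, n < ℓ → P n = Polynomial.X ^ n)
    (hP_rec : SatisfiesRec ℓ a P)
    (hPt_init : ∀ (n : ℕ) (hn : n < ℓ),
      Pt n = ∑ j : Fin ℓ, Polynomial.C (S ⟨n, hn⟩ j) * Polynomial.X ^ (j : ℕ))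
    (hPt_rec : SatisfiesRec ℓ a Pt)
    (L Lt : LaurentPolynomial K →ₗ[K] K)
    (hL : IsLBP ℓ P L) (hL1 : L 1 = 1)
    (hLt : IsLBP ℓ Pt Lt) (hLt1 : Lt 1 = 1)
    (μ μt : ℤ → K)
    (hμ : ∀ n : ℤ, μ n = L (LaurentPolynomial.T n))
    (hμt : ∀ n : ℤ, μt n = Lt (LaurentPolynomial.T n)) :
    ∀ m : ℤ, (fun i : Fin ℓ => μt (m * ℓ + (i : ℕ))) =
      S⁻¹.mulVec (fun i : Fin ℓ => μ (m * ℓ + (i : ℕ))) :=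
  moments_of_equivalent_LBP_general ℓ hℓ a haℓ P Pt S hS_lower hS_diag hP_init hP_rec hPt_init
    hPt_rec L Lt hL hL1 hLt hLt1 μ μt hμ hμt
end

section
/- Let (P_n)_{n≥0} be defined by the (ℓ+2)-term recurrence with the primitive initial condition P_n(x) = x^n for 0 ≤ n ≤ ℓ−1. Then for every n ≥ 0, the polynomial identity ∑_{η ∈ F_n} w(η)·x^{width(η)} = P_n(x) holds, where F_n is the (finite) set of Favard paths of height n. -/
open scoped BigOperators

section Paths

variable {σ : Type} {K : Type*}

/-- Final point of a path given by its initial point and list of steps. -/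
def endPt (vec : σ → ℤ × ℤ) : ℤ × ℤ → List σ → ℤ × ℤ
  | p, [] => p
  | p, s :: rest => endPt vec (p + vec s) rest

/-- All vertices (starting points of steps together with the final point)
of a path. -/
def verts (vec : σ → ℤ × ℤ) : ℤ × ℤ → List σ → List (ℤ × ℤ)
  | p, [] => [p]
  | p, s :: rest => p :: verts vec (p + vec s) rest

/-- Weight of a path: product of the weights of its steps, each weight
depending on the step and on its starting point. -/
def pathWt [Field K] (vec : σ → ℤ × ℤ) (w : σ → ℤ × ℤ → K) :
    ℤ × ℤ → List σ → K
  | _, [] => 1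
  | p, s :: rest => w s p * pathWt vec w (p + vec s) rest

/-- Every step of the path, placed at its starting point, satisfies `ok`. -/
def stepsOK (vec : σ → ℤ × ℤ) (ok : σ → ℤ × ℤ → Prop) :
    ℤ × ℤ → List σ → Prop
  | _, [] => True
  | p, s :: rest => ok s p ∧ stepsOK vec ok (p + vec s) rest

end Paths

section Favard

variable {K : Type*} [Field K]

/-- Steps of pre-Favard paths: `(true, i)` is the step `χ_i = (i,i)`
(`1 ≤ i ≤ ℓ`), `(false, i)` is the step `α_i = (0,i)` for `1 ≤ i ≤ ℓ`
and `α_{ℓ+1} = (ℓ, ℓ+1)`. -/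
def fvec (ℓ : ℕ) : Bool × ℕ → ℤ × ℤ
  | (true, i) => ((i : ℤ), (i : ℤ))
  | (false, i) => if i ≤ ℓ then (0, (i : ℤ)) else ((ℓ : ℤ), (ℓ : ℤ) + 1)

/-- Weight of a Favard step: `χ_i` has weight `1`; `α_i` starting at
`y`-coordinate `t` has weight `-a i (t + i - 1)`. -/
def fWt (a : ℕ → ℕ → K) : Bool × ℕ → ℤ × ℤ → K
  | (true, _), _ => 1
  | (false, i), q => -a i (q.2 + i - 1).toNat

/-- A Favard path (recorded as its list of steps, the initial point being
`(0, -ℓ+1)`): the steps are among `χ_1, …, χ_ℓ, α_1, …, α_{ℓ+1}`; any step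
`χ_i` with `i ≤ ℓ-1` occurs only as the first step; and every step `α_i`
starts at a `y`-coordinate `t` with `t + i - 1 ≥ 0`. -/
def IsFavard (ℓ : ℕ) (ω : List (Bool × ℕ)) : Prop :=
  (∀ s ∈ ω, 1 ≤ s.2 ∧ (s.1 = true → s.2 ≤ ℓ) ∧ (s.1 = false → s.2 ≤ ℓ + 1)) ∧
  (∀ s ∈ ω.tail, s.1 = true → s.2 = ℓ) ∧
  stepsOK (fvec ℓ) (fun s q => s.1 = false → 0 ≤ q.2 + s.2 - 1)
    (0, 1 - (ℓ : ℤ)) ω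

/-- Width of a Favard path: the sum of the `x`-components of its steps. -/
def favWidth (ℓ : ℕ) (ω : List (Bool × ℕ)) : ℕ :=
  (endPt (fvec ℓ) (0, 1 - (ℓ : ℤ)) ω).1.toNat

/-- The set of Favard paths of height `n` (the height being the sum of the
`y`-components of the steps). -/
def FavardSet (ℓ : ℕ) (n : ℕ) : Set (List (Bool × ℕ)) :=
  {ω | IsFavard ℓ ω ∧
    (endPt (fvec ℓ) (0, 1 - (ℓ : ℤ)) ω).2 = (n : ℤ) + 1 - (ℓ : ℤ)}

end Favard

/-! Sort the Favard paths of height `n ≥ ℓ` by their last step. Removing a last step `χ_ℓ`, or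
`α_i` with `i ≤ ℓ + 1`, leaves an arbitrary Favard path of height `n - ℓ`, resp. `n - i` (for
`α_{ℓ+1}` this needs `n > ℓ`), and the removed step contributes `x^ℓ`, `-a_{i,n-ℓ}`, resp.
`-a_{ℓ+1,n-ℓ} x^ℓ`. So the generating polynomials of Favard paths satisfy the recurrence of
`P`; for `n < ℓ` the only Favard path of height `n` is the empty one or `χ_n`, which gives the
initial values `x^n`. A solution of the recurrence is determined by its first `ℓ` values. -/

open Polynomial

section Paths

variable {σ : Type} (vec : σ → ℤ × ℤ)

theorem endPt_concat (p : ℤ × ℤ) (ξ : List σ) (s : σ) :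
    endPt vec p (ξ ++ [s]) = endPt vec p ξ + vec s := by
  induction ξ generalizing p with
  | nil => rfl
  | cons t ξ ih => exact ih _

theorem pathWt_concat {K : Type*} [Field K] (w : σ → ℤ × ℤ → K) (p : ℤ × ℤ) (ξ : List σ)
    (s : σ) : pathWt vec w p (ξ ++ [s]) = pathWt vec w p ξ * w s (endPt vec p ξ) := by
  induction ξ generalizing p with
  | nil => simp [pathWt, endPt]
  | cons t ξ ih => simp [pathWt, endPt, ih, mul_assoc]

theorem stepsOK_concat_iff (ok : σ → ℤ × ℤ → Prop) (p : ℤ × ℤ) (ξ : List σ) (s : σ) :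
    stepsOK vec ok p (ξ ++ [s]) ↔ stepsOK vec ok p ξ ∧ ok s (endPt vec p ξ) := by
  induction ξ generalizing p with
  | nil => simp [stepsOK, endPt]
  | cons t ξ ih => simp [stepsOK, endPt, ih, and_assoc]

theorem le_endPt_fst {p : ℤ × ℤ} {ω : List σ} (h : ∀ s ∈ ω, 0 ≤ (vec s).1) :
    p.1 ≤ (endPt vec p ω).1 := by
  induction ω generalizing p with
  | nil => exact le_rfl
  | cons s ω ih =>
    have := h s (by simp)
    have := @ih (p + vec s) (fun t ht => h t (by simp [ht]))
    simp only [endPt, Prod.fst_add] at *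
    omega

theorem add_length_le_endPt_snd {p : ℤ × ℤ} {ω : List σ} (h : ∀ s ∈ ω, 1 ≤ (vec s).2) :
    p.2 + ω.length ≤ (endPt vec p ω).2 := by
  induction ω generalizing p with
  | nil => simp [endPt]
  | cons s ω ih =>
    have := h s (by simp)
    have := @ih (p + vec s) (fun t ht => h t (by simp [ht]))
    simp only [endPt, Prod.snd_add, List.length_cons] at *
    omega

end Paths

theorem Set.Finite.setOf_length_le_forall_mem {α : Type*} {T : Set α} (hT : T.Finite) (n : ℕ) :
    {l : List α | l.length ≤ n ∧ ∀ x ∈ l, x ∈ T}.Finite := by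
  have := hT.to_subtype
  refine ((List.finite_length_le T n).image (List.map Subtype.val)).subset ?_
  rintro l ⟨hl, hT⟩
  lift l to List T using hT
  exact ⟨l, by simpa using hl, rfl⟩

theorem finsum_mem_eq_sum_finsum_mem_concat {σ M : Type*} [AddCommMonoid M]
    {A : Set (List σ)} (hA : A.Finite) (hnil : [] ∉ A) (S : Finset σ)
    (hS : ∀ ξ s, ξ ++ [s] ∈ A → s ∈ S) (f : List σ → M) :
    ∑ᶠ ω ∈ A, f ω = ∑ s ∈ S, ∑ᶠ ξ ∈ (· ++ [s]) ⁻¹' A, f (ξ ++ [s]) := by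
  have hA_eq : A = ⋃ s ∈ (S : Set σ), (· ++ [s]) '' ((· ++ [s]) ⁻¹' A) := by
    ext ω
    simp only [Set.mem_iUnion, Set.mem_image, Set.mem_preimage, Finset.mem_coe]
    constructor
    · intro hω
      obtain ⟨ξ, s, rfl⟩ := (List.eq_nil_or_concat' ω).resolve_left (by rintro rfl; exact hnil hω)
      exact ⟨s, hS ξ s hω, ξ, hω, rfl⟩
    · rintro ⟨s, -, ξ, hξ, rfl⟩
      exact hξ
  have hdisj : (S : Set σ).PairwiseDisjoint fun s => (· ++ [s]) '' ((· ++ [s]) ⁻¹' A) := by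
    rintro s - t - hst
    refine Set.disjoint_left.2 ?_
    rintro _ ⟨ξ, -, rfl⟩ ⟨η, -, h⟩
    exact hst (List.append_singleton_inj.1 h).2.symm
  conv_lhs => rw [hA_eq]
  rw [finsum_mem_biUnion hdisj S.finite_toSet
    (fun s _ => hA.subset (by rintro _ ⟨ξ, hξ, rfl⟩; exact hξ)), finsum_mem_coe_finset]
  refine Finset.sum_congr rfl fun s _ => ?_
  exact finsum_mem_image (f := f) fun ξ _ η _ h => List.append_cancel_right h

section FavardPaths

def IsFavardStep (ℓ : ℕ) (s : Bool × ℕ) : Prop :=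
  1 ≤ s.2 ∧ (s.1 = true → s.2 ≤ ℓ) ∧ (s.1 = false → s.2 ≤ ℓ + 1)

variable {ℓ n : ℕ}

theorem fvec_fst_nonneg (ℓ : ℕ) (s : Bool × ℕ) : 0 ≤ (fvec ℓ s).1 := by
  rcases s with ⟨_ | _, i⟩
  · simp only [fvec]
    split_ifs <;> simp
  · simp [fvec]

theorem IsFavardStep.fvec_snd {s : Bool × ℕ} (hs : IsFavardStep ℓ s) :
    (fvec ℓ s).2 = s.2 := by
  rcases s with ⟨_ | _, i⟩
  · have := hs.2.2 rfl
    simp only [fvec]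
    split_ifs
    · rfl
    · simp only
      omega
  · rfl

theorem IsFavard.add_length_le_endPt_snd {ω : List (Bool × ℕ)} (hω : IsFavard ℓ ω) :
    1 - (ℓ : ℤ) + ω.length ≤ (endPt (fvec ℓ) (0, 1 - ℓ) ω).2 := by
  refine _root_.add_length_le_endPt_snd (fvec ℓ) fun s hs => ?_
  rw [IsFavardStep.fvec_snd (hω.1 s hs)]
  exact_mod_cast (hω.1 s hs).1

theorem isFavard_concat_iff {ξ : List (Bool × ℕ)} {s : Bool × ℕ} :
    IsFavard ℓ (ξ ++ [s]) ↔ IsFavard ℓ ξ ∧ IsFavardStep ℓ s ∧ (ξ ≠ [] → s.1 = true → s.2 = ℓ) ∧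
      (s.1 = false → 0 ≤ (endPt (fvec ℓ) (0, 1 - ℓ) ξ).2 + s.2 - 1) := by
  have htail : (∀ t ∈ (ξ ++ [s]).tail, t.1 = true → t.2 = ℓ) ↔
      (∀ t ∈ ξ.tail, t.1 = true → t.2 = ℓ) ∧ (ξ ≠ [] → s.1 = true → s.2 = ℓ) := by
    rcases ξ with _ | ⟨t, ξ⟩
    · simp
    · simp only [List.cons_append, List.tail_cons, List.mem_append, List.mem_singleton, or_imp,
        forall_and, forall_eq, ne_eq, reduceCtorEq, not_false_eq_true, forall_const]
  simp only [IsFavard, IsFavardStep, htail, stepsOK_concat_iff, List.forall_mem_append,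
    List.forall_mem_singleton]
  tauto

theorem nil_mem_favardSet_iff : [] ∈ FavardSet ℓ n ↔ n = 0 := by
  simp [FavardSet, IsFavard, stepsOK, endPt]

theorem concat_mem_favardSet_iff {ξ : List (Bool × ℕ)} {s : Bool × ℕ} :
    ξ ++ [s] ∈ FavardSet ℓ n ↔ ξ ∈ FavardSet ℓ (n - s.2) ∧ s.2 ≤ n ∧ IsFavardStep ℓ s ∧
      (ξ ≠ [] → s.1 = true → s.2 = ℓ) ∧ (s.1 = false → ℓ ≤ n) := by
  simp only [FavardSet, Set.mem_ofPred_eq, isFavard_concat_iff, endPt_concat, Prod.snd_add]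
  constructor
  · rintro ⟨⟨hξ, hs, hsT, hsF⟩, hend⟩
    have hlen := hξ.add_length_le_endPt_snd
    rw [hs.fvec_snd] at hend
    have hsn : s.2 ≤ n := by omega
    exact ⟨⟨hξ, by omega⟩, hsn, hs, hsT, fun hf => by have := hsF hf; omega⟩
  · rintro ⟨⟨hξ, hend⟩, hsn, hs, hsT, hℓn⟩
    rw [hs.fvec_snd]
    exact ⟨⟨hξ, hs, hsT, fun hf => by have := hℓn hf; omega⟩, by omega⟩

theorem favardSet_finite (ℓ n : ℕ) : (FavardSet ℓ n).Finite := by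
  refine ((Set.finite_univ.prod (Set.finite_Iic (ℓ + 1))).setOf_length_le_forall_mem n).subset ?_
  intro ω hω
  refine ⟨?_, fun s hs => ⟨trivial, ?_⟩⟩
  · have := hω.1.add_length_le_endPt_snd
    rw [hω.2] at this
    omega
  · have hs : IsFavardStep ℓ s := hω.1.1 s hs
    rcases s with ⟨_ | _, i⟩
    · exact hs.2.2 rfl
    · exact (hs.2.1 rfl).trans ℓ.le_succ

theorem favardSet_zero (ℓ : ℕ) : FavardSet ℓ 0 = {[]} := by
  ext ω
  rcases List.eq_nil_or_concat' ω with rfl | ⟨ξ, s, rfl⟩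
  · simp [nil_mem_favardSet_iff]
  · simp only [concat_mem_favardSet_iff, Set.mem_singleton_iff, List.append_eq_nil_iff,
      List.cons_ne_nil, and_false, iff_false]
    rintro ⟨-, hsn, hs, -⟩
    have := hs.1
    omega

theorem favardSet_of_lt (h0 : 0 < n) (hn : n < ℓ) : FavardSet ℓ n = {[(true, n)]} := by
  ext ω
  rcases List.eq_nil_or_concat' ω with rfl | ⟨ξ, s, rfl⟩
  · simp [nil_mem_favardSet_iff]
    omega
  · rw [concat_mem_favardSet_iff, Set.mem_singleton_iff]
    constructor
    · rintro ⟨hξ, hsn, hs, hsT, hsF⟩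
      rcases s with ⟨_ | _, i⟩
      · exact absurd (hsF rfl) (by omega)
      · obtain rfl : ξ = [] := by
          by_contra hne
          have := hsT hne rfl
          simp only at this hsn
          omega
        rw [nil_mem_favardSet_iff] at hξ
        obtain rfl : i = n := by simp only at hξ hsn; omega
        rfl
    · intro h
      obtain ⟨rfl, rfl⟩ := List.append_singleton_inj.1 (h.trans (List.nil_append _).symm)
      simp [nil_mem_favardSet_iff, IsFavardStep]
      omega

theorem preimage_concat_favardSet {s : Bool × ℕ} (hs : IsFavardStep ℓ s)
    (hsT : s.1 = true → s.2 = ℓ) (hsn : s.2 ≤ n) (hℓn : s.1 = false → ℓ ≤ n) :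
    (· ++ [s]) ⁻¹' FavardSet ℓ n = FavardSet ℓ (n - s.2) := by
  ext ξ
  exact ⟨fun h => (concat_mem_favardSet_iff.1 h).1,
    fun h => concat_mem_favardSet_iff.2 ⟨h, hsn, hs, fun _ => hsT, hℓn⟩⟩

theorem preimage_concat_favardSet_of_lt {s : Bool × ℕ} (hn : n < s.2) :
    (· ++ [s]) ⁻¹' FavardSet ℓ n = ∅ :=
  Set.eq_empty_of_forall_notMem fun _ h => (concat_mem_favardSet_iff.1 h).2.1.not_gt hn

theorem favWidth_concat (ℓ : ℕ) (ξ : List (Bool × ℕ)) (s : Bool × ℕ) :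
    favWidth ℓ (ξ ++ [s]) = favWidth ℓ ξ + (fvec ℓ s).1.toNat := by
  have hξ := le_endPt_fst (fvec ℓ) (p := (0, 1 - ℓ)) (ω := ξ) fun s _ => fvec_fst_nonneg ℓ s
  have hs := fvec_fst_nonneg ℓ s
  simp only [favWidth, endPt_concat, Prod.fst_add] at hξ ⊢
  omega

def favardLastSteps (ℓ : ℕ) : Finset (Bool × ℕ) :=
  insert (true, ℓ) ((Finset.Icc 1 (ℓ + 1)).map (Function.Embedding.sectR false ℕ))

theorem mem_favardLastSteps_of_concat_mem {ξ : List (Bool × ℕ)} {s : Bool × ℕ} (hn : ℓ ≤ n)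
    (h : ξ ++ [s] ∈ FavardSet ℓ n) : s ∈ favardLastSteps ℓ := by
  obtain ⟨hξ, hsn, hs, hsT, -⟩ := concat_mem_favardSet_iff.1 h
  rcases s with ⟨_ | _, i⟩
  · simpa [favardLastSteps] using ⟨hs.1, hs.2.2 rfl⟩
  · obtain rfl : i = ℓ := by
      rcases eq_or_ne ξ [] with rfl | hne
      · have := hs.2.1 rfl
        rw [nil_mem_favardSet_iff] at hξ
        simp only at hξ hsn this
        omega
      · exact hsT hne rfl
    simp [favardLastSteps]

end FavardPaths

section FavardPolynomials

variable {K : Type*} [Field K]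

noncomputable def favardTerm (ℓ : ℕ) (a : ℕ → ℕ → K) (ω : List (Bool × ℕ)) : K[X] :=
  C (pathWt (fvec ℓ) (fWt a) (0, 1 - ℓ) ω) * X ^ favWidth ℓ ω

noncomputable def favardPoly (ℓ : ℕ) (a : ℕ → ℕ → K) (n : ℕ) : K[X] :=
  ∑ᶠ ω ∈ FavardSet ℓ n, favardTerm ℓ a ω

variable (a : ℕ → ℕ → K) {ℓ n : ℕ}

theorem fWt_congr_snd (s : Bool × ℕ) {p q : ℤ × ℤ} (h : p.2 = q.2) : fWt a s p = fWt a s q := by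
  rcases s with ⟨_ | _, i⟩ <;> simp [fWt, h]

theorem fWt_false_of_le {i : ℕ} (hi : i ≤ n) (hn : ℓ ≤ n) :
    fWt a (false, i) (0, ((n - i : ℕ) : ℤ) + 1 - ℓ) = -a i (n - ℓ) := by
  simp only [fWt]
  congr
  omega

theorem favardTerm_concat {m : ℕ} {ξ : List (Bool × ℕ)} (hξ : ξ ∈ FavardSet ℓ m)
    (s : Bool × ℕ) :
    favardTerm ℓ a (ξ ++ [s]) =
      C (fWt a s (0, (m : ℤ) + 1 - ℓ)) * X ^ (fvec ℓ s).1.toNat * favardTerm ℓ a ξ := by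
  rw [favardTerm, favardTerm, pathWt_concat, favWidth_concat,
    fWt_congr_snd a s (q := (0, _)) hξ.2, map_mul, pow_add]
  ring

theorem finsum_favardTerm_concat (m : ℕ) (s : Bool × ℕ) :
    ∑ᶠ ξ ∈ FavardSet ℓ m, favardTerm ℓ a (ξ ++ [s]) =
      C (fWt a s (0, (m : ℤ) + 1 - ℓ)) * X ^ (fvec ℓ s).1.toNat * favardPoly ℓ a m := by
  rw [favardPoly, mul_finsum_mem]
  exact finsum_mem_congr rfl fun ξ hξ => favardTerm_concat a hξ s

theorem favardPoly_of_lt (hn : n < ℓ) : favardPoly ℓ a n = X ^ n := by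
  rcases Nat.eq_zero_or_pos n with rfl | h0
  · simp [favardPoly, favardSet_zero, favardTerm, pathWt, favWidth, endPt]
  · simp [favardPoly, favardSet_of_lt h0 hn, favardTerm, pathWt, favWidth, endPt, fWt, fvec]

theorem satisfiesRec_favardPoly (hℓ : 1 ≤ ℓ) : SatisfiesRec ℓ a (favardPoly ℓ a) := by
  intro n hn
  have block : ∀ s, IsFavardStep ℓ s → (s.1 = true → s.2 = ℓ) → s.2 ≤ n →
      ∑ᶠ ξ ∈ (· ++ [s]) ⁻¹' FavardSet ℓ n, favardTerm ℓ a (ξ ++ [s]) =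
        C (fWt a s (0, ((n - s.2 : ℕ) : ℤ) + 1 - ℓ)) * X ^ (fvec ℓ s).1.toNat *
          favardPoly ℓ a (n - s.2) := fun s hs hsT hsn => by
    rw [preimage_concat_favardSet hs hsT hsn fun _ => hn, finsum_favardTerm_concat]
  have hχ : ∑ᶠ ξ ∈ (· ++ [(true, ℓ)]) ⁻¹' FavardSet ℓ n, favardTerm ℓ a (ξ ++ [(true, ℓ)]) =
      X ^ ℓ * favardPoly ℓ a (n - ℓ) := by
    rw [block (true, ℓ) ⟨hℓ, fun _ => le_rfl, nofun⟩ (fun _ => rfl) hn]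
    simp [fWt, fvec]
  have hα : ∀ i ∈ Finset.Icc 1 ℓ,
      ∑ᶠ ξ ∈ (· ++ [(false, i)]) ⁻¹' FavardSet ℓ n, favardTerm ℓ a (ξ ++ [(false, i)]) =
        -(C (a i (n - ℓ)) * favardPoly ℓ a (n - i)) := by
    intro i hi
    rw [Finset.mem_Icc] at hi
    rw [block (false, i) ⟨hi.1, nofun, fun _ => by omega⟩ nofun (by simp only; omega),
      fWt_false_of_le a (by omega) hn]
    simp [fvec, hi.2]
  have hαtop : ∑ᶠ ξ ∈ (· ++ [(false, ℓ + 1)]) ⁻¹' FavardSet ℓ n,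
      favardTerm ℓ a (ξ ++ [(false, ℓ + 1)]) =
        -(C (a (ℓ + 1) (n - ℓ)) * X ^ ℓ * if n = ℓ then 0 else favardPoly ℓ a (n - ℓ - 1)) := by
    split_ifs with h
    · rw [preimage_concat_favardSet_of_lt (by simp only; omega), finsum_mem_empty]
      simp
    · rw [block (false, ℓ + 1) ⟨by omega, nofun, fun _ => le_rfl⟩ nofun (by simp only; omega),
        fWt_false_of_le a (by omega) hn]
      simp [fvec, Nat.sub_sub]
  have hsplit : ∀ g : ℕ → K[X],
      ∑ i ∈ Finset.Icc 1 ℓ, g i = ∑ i ∈ Finset.Icc 1 (ℓ - 1), g i + g ℓ := by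
    obtain ⟨m, rfl⟩ := Nat.exists_eq_add_of_le' hℓ
    simp [Finset.sum_Icc_succ_top]
  rw [favardPoly, finsum_mem_eq_sum_finsum_mem_concat (favardSet_finite ℓ n)
    (by rw [nil_mem_favardSet_iff]; omega) (favardLastSteps ℓ)
    (fun _ _ h => mem_favardLastSteps_of_concat_mem hn h), favardLastSteps,
    Finset.sum_insert (by simp), Finset.sum_map, Finset.sum_Icc_succ_top (by omega)]
  simp only [Function.Embedding.sectR_apply]
  rw [Finset.sum_congr rfl hα, hsplit, hχ, hαtop, Finset.sum_neg_distrib]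
  ring

end FavardPolynomials

theorem SatisfiesRec.unique {K : Type*} [Field K] {ℓ : ℕ} {a : ℕ → ℕ → K} {P Q : ℕ → K[X]}
    (hP : SatisfiesRec ℓ a P) (hℓ : 1 ≤ ℓ) (hQ : SatisfiesRec ℓ a Q) (h : ∀ n < ℓ, P n = Q n) :
    P = Q := by
  funext n
  induction n using Nat.strong_induction_on with
  | _ n ih =>
    rcases lt_or_ge n ℓ with hn | hn
    · exact h n hn
    have hIcc : ∀ i ∈ Finset.Icc 1 (ℓ - 1), P (n - i) = Q (n - i) := fun i hi =>
      ih (n - i) (by rw [Finset.mem_Icc] at hi; omega)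
    rw [hP n hn, hQ n hn, ih (n - ℓ) (by omega), Finset.sum_congr rfl fun i hi => by rw [hIcc i hi]]
    split_ifs
    · rfl
    · rw [ih (n - ℓ - 1) (by omega)]

theorem lbp_eq_favard_generating_function_general {K : Type*} [Field K]
    (ℓ : ℕ) (hℓ : 1 ≤ ℓ) (a : ℕ → ℕ → K)
    (P : ℕ → Polynomial K)
    (hinit : ∀ n : ℕ, n < ℓ → P n = Polynomial.X ^ n)
    (hrec : SatisfiesRec ℓ a P) :
    ∀ n : ℕ,
      (∑ᶠ ω ∈ FavardSet ℓ n,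
        Polynomial.C (pathWt (fvec ℓ) (fWt a) (0, 1 - (ℓ : ℤ)) ω) *
          Polynomial.X ^ favWidth ℓ ω) = P n :=
  congrFun ((satisfiesRec_favardPoly a hℓ).unique hℓ hrec fun n hn =>
    (favardPoly_of_lt a hn).trans (hinit n hn).symm)

/-- The primitive `ℓ`-LBPs are the generating functions of Favard paths:
`∑_{η ∈ F_n} w(η) x^{width η} = P n`. -/
theorem lbp_eq_favard_generating_function {K : Type*} [Field K]
    (ℓ : ℕ) (hℓ : 1 ≤ ℓ) (a : ℕ → ℕ → K)
    (haℓ : ∀ j : ℕ, a ℓ j ≠ 0) (haℓ1 : ∀ j : ℕ, a (ℓ + 1) j ≠ 0)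
    (P : ℕ → Polynomial K)
    (hinit : ∀ n : ℕ, n < ℓ → P n = Polynomial.X ^ n)
    (hrec : SatisfiesRec ℓ a P) :
    ∀ n : ℕ,
      (∑ᶠ ω ∈ FavardSet ℓ n,
        Polynomial.C (pathWt (fvec ℓ) (fWt a) (0, 1 - (ℓ : ℤ)) ω) *
          Polynomial.X ^ favWidth ℓ ω) = P n :=
  lbp_eq_favard_generating_function_general ℓ hℓ a P hinit hrec
end

section
/- General orthogonality: Let 𝓛 : K[x,x⁻¹] → K be the linear functional defined by the combinatorial moments μ_n, and let (P_n) be the primitive sequence defined by the (ℓ+2)-term recurrence with P_n(x) = x^n for 0 ≤ n ≤ ℓ−1. Then for every n ≥ 0 and k ∈ ℤ: (a) if n ≤ k, then 𝓛[P_n(x)x^{−ℓk}] = (−1)^n·∑ w(ω), the sum over all dual ℓ-Schröder paths ω from (0,n) to (ℓk−n, 0); (b) if 0 ≤ k ≤ n−1, then 𝓛[P_n(x)x^{−ℓk}] = 0; (c) if k < 0, then 𝓛[P_n(x)x^{−ℓk}] = a_{ℓ,0}·∑ w(ω), the sum over all ℓ-Schröder paths ω from (0,n) to (n−ℓ(k+1),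 0). -/
/-!
The right-hand sides of (a)–(c) are the values at `y = n` of
`G(y, k) = (-1)^y w(dual paths (0, y) → (ℓk - y, 0))` for `k ≥ 0`, which vanishes for
`0 ≤ k < y` because `x + (ℓ-1)y` never decreases along a dual path, and of
`G(y, k) = a_{ℓ,0} w(Schröder paths (0, y) → (y - ℓ(k+1), 0))` for `k < 0`.
Applying `𝓛` to the recurrence times `x^{-ℓ(k+1)}` gives a recurrence for
`F(y, k) = 𝓛[P_y x^{-ℓk}]` that determines `F` at height `y + ℓ` from lower heights, and the
values at heights `y < ℓ` are moments, which agree with `G` by definition. `G` satisfies the same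
recurrence by splitting paths at their first step. For dual paths, `a_{ℓ,t}` times the weight of
`A_i` times the change `(-1)^(ℓ-i)` of the sign `(-1)^y` is `-a_{i,t}`, the weight of the
Schröder step `a_i`, for every `i ≠ ℓ`; the step `A_ℓ` accounts for the term `x^ℓ P_{n-ℓ}`.
-/

open scoped BigOperators

section Schroder

variable {K : Type*} [Field K]

/-- Steps of `ℓ`-Schröder paths: `a_i = (i, ℓ - i)` for `0 ≤ i ≤ ℓ` and
`a_{ℓ+1} = (1, -1)`. -/
def svec (ℓ : ℕ) (i : ℕ) : ℤ × ℤ :=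
  if i ≤ ℓ then ((i : ℤ), (ℓ : ℤ) - i) else (1, -1)

/-- `ω` (a list of step indices `≤ ℓ+1`) is an `ℓ`-Schröder path from `p`:
it never goes below the `x`-axis. -/
def IsSchroder (ℓ : ℕ) (p : ℤ × ℤ) (ω : List ℕ) : Prop :=
  (∀ s ∈ ω, s ≤ ℓ + 1) ∧ ∀ q ∈ verts (svec ℓ) p ω, 0 ≤ q.2

/-- Weight of an `ℓ`-Schröder step: `a_0` has weight `1`, and `a_i`
(`1 ≤ i ≤ ℓ+1`) starting at `y`-coordinate `t` has weight `a i t`. -/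
def aWt (a : ℕ → ℕ → K) (s : ℕ) (q : ℤ × ℤ) : K :=
  if s = 0 then 1 else a s q.2.toNat

/-- `B n`: the set of `ℓ`-Schröder paths from `(0, n mod ℓ)` to `(n, 0)`. -/
def BSet (ℓ : ℕ) (n : ℤ) : Set (List ℕ) :=
  {ω | IsSchroder ℓ (0, n % (ℓ : ℤ)) ω ∧
    endPt (svec ℓ) (0, n % (ℓ : ℤ)) ω = (n, 0)}

/-- `w(B n)`: generating function of `B n`. -/
noncomputable def wB (ℓ : ℕ) (a : ℕ → ℕ → K) (n : ℤ) : K :=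
  ∑ᶠ ω ∈ BSet ℓ n, pathWt (svec ℓ) (aWt a) (0, n % (ℓ : ℤ)) ω

/-- Steps of dual `ℓ`-Schröder paths: `A_i = (ℓ-i, ℓ-i)` for `0 ≤ i ≤ ℓ-1`,
`A_ℓ = (ℓ, 0)` and `A_{ℓ+1} = (ℓ-1, -1)`. -/
def dvec (ℓ : ℕ) (i : ℕ) : ℤ × ℤ :=
  if i < ℓ then ((ℓ : ℤ) - i, (ℓ : ℤ) - i)
  else if i = ℓ then ((ℓ : ℤ), 0) else ((ℓ : ℤ) - 1, -1)

/-- `ω` is a dual `ℓ`-Schröder path from `p`. -/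
def IsDualSchroder (ℓ : ℕ) (p : ℤ × ℤ) (ω : List ℕ) : Prop :=
  (∀ s ∈ ω, s ≤ ℓ + 1) ∧ ∀ q ∈ verts (dvec ℓ) p ω, 0 ≤ q.2

/-- Weight of a dual `ℓ`-Schröder step starting at `y`-coordinate `t`:
`(-1)^{ℓ+1} / a ℓ t` for `A_0`, `(-1)^{ℓ+1+i} a i t / a ℓ t` for
`1 ≤ i ≤ ℓ-1` or `i = ℓ+1`, and `1 / a ℓ t` for `A_ℓ`. -/
def dWt (ℓ : ℕ) (a : ℕ → ℕ → K) (s : ℕ) (q : ℤ × ℤ) : K :=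
  if s = 0 then (-1 : K) ^ (ℓ + 1) / a ℓ q.2.toNat
  else if s = ℓ then 1 / a ℓ q.2.toNat
  else (-1 : K) ^ (ℓ + 1 + s) * a s q.2.toNat / a ℓ q.2.toNat

/-- `B̃ n`: the set of dual `ℓ`-Schröder paths from `(0, (-n) mod ℓ)`
to `(n, 0)`. -/
def DSet (ℓ : ℕ) (n : ℤ) : Set (List ℕ) :=
  {ω | IsDualSchroder ℓ (0, (-n) % (ℓ : ℤ)) ω ∧
    endPt (dvec ℓ) (0, (-n) % (ℓ : ℤ)) ω = (n, 0)}

/-- `w(B̃ n)`: generating function of `B̃ n`. -/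
noncomputable def wD (ℓ : ℕ) (a : ℕ → ℕ → K) (n : ℤ) : K :=
  ∑ᶠ ω ∈ DSet ℓ n, pathWt (dvec ℓ) (dWt ℓ a) (0, (-n) % (ℓ : ℤ)) ω

/-- The combinatorial moments: `μ n = a ℓ 0 · w(B_{n-ℓ})` for `n ≥ ℓ`,
`μ n = 0` for `1 ≤ n ≤ ℓ-1`, and `μ n = (-1)^{n mod ℓ} · w(B̃_{-n})`
for `n ≤ 0`. -/
noncomputable def combMoment (ℓ : ℕ) (a : ℕ → ℕ → K) (n : ℤ) : K :=
  if (ℓ : ℤ) ≤ n then a ℓ 0 * wB ℓ a (n - ℓ)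
  else if 1 ≤ n then 0
  else (-1 : K) ^ (n % (ℓ : ℤ)).toNat * wD ℓ a (-n)

end Schroder

section NonnegPath

variable {σ : Type} {K : Type*} [Field K]

def IsNonnegPath (vec : σ → ℤ × ℤ) (S : Finset σ) (p q : ℤ × ℤ) (ω : List σ) : Prop :=
  (∀ s ∈ ω, s ∈ S) ∧ (∀ r ∈ verts vec p ω, 0 ≤ r.2) ∧ endPt vec p ω = q

noncomputable def pathSum (vec : σ → ℤ × ℤ) (w : σ → ℤ × ℤ → K) (S : Finset σ)
    (p q : ℤ × ℤ) : K :=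
  ∑ᶠ ω ∈ {ω | IsNonnegPath vec S p q ω}, pathWt vec w p ω

variable {vec : σ → ℤ × ℤ} {w : σ → ℤ × ℤ → K} {S : Finset σ} {p q : ℤ × ℤ}

@[simp]
lemma isNonnegPath_nil : IsNonnegPath vec S p q [] ↔ 0 ≤ p.2 ∧ p = q := by
  simp [IsNonnegPath, verts, endPt]

lemma isNonnegPath_cons {s : σ} {ω : List σ} :
    IsNonnegPath vec S p q (s :: ω) ↔
      s ∈ S ∧ 0 ≤ p.2 ∧ IsNonnegPath vec S (p + vec s) q ω := by
  simp only [IsNonnegPath, verts, endPt, List.forall_mem_cons]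
  tauto

lemma IsNonnegPath.snd_nonneg {ω : List σ} (h : IsNonnegPath vec S p q ω) : 0 ≤ p.2 := by
  cases ω with
  | nil => exact (isNonnegPath_nil.1 h).1
  | cons s ω => exact (isNonnegPath_cons.1 h).2.1

lemma IsNonnegPath.add_mul_length_le (φ : ℤ × ℤ →+ ℤ) {c : ℤ} (hφ : ∀ s ∈ S, c ≤ φ (vec s))
    {ω : List σ} (h : IsNonnegPath vec S p q ω) : φ p + c * ω.length ≤ φ q := by
  induction ω generalizing p with
  | nil => obtain ⟨-, rfl⟩ := isNonnegPath_nil.1 h; simp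
  | cons s ω ih =>
    obtain ⟨hs, -, h⟩ := isNonnegPath_cons.1 h
    have := ih h
    rw [map_add] at this
    push_cast [List.length_cons]
    linarith [hφ s hs]

lemma finite_setOf_isNonnegPath (φ : ℤ × ℤ →+ ℤ) (hφ : ∀ s ∈ S, 1 ≤ φ (vec s)) :
    {ω | IsNonnegPath vec S p q ω}.Finite := by
  refine ((List.finite_length_le S (φ q - φ p).toNat).image List.unattach).subset ?_
  intro ω hω
  have hlen := hω.add_mul_length_le φ hφ
  refine ⟨ω.attachWith (· ∈ S) hω.1, ?_, List.unattach_attachWith⟩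
  simp only [Set.mem_ofPred_eq, List.length_attachWith]
  omega

lemma pathSum_of_snd_neg (hp : p.2 < 0) : pathSum vec w S p q = 0 := by
  have : {ω | IsNonnegPath vec S p q ω} = ∅ :=
    Set.eq_empty_of_forall_notMem fun ω hω => hp.not_ge hω.snd_nonneg
  rw [pathSum, this, finsum_mem_empty]

lemma pathSum_eq_zero_of_lt (φ : ℤ × ℤ →+ ℤ) (hφ : ∀ s ∈ S, 0 ≤ φ (vec s)) (h : φ q < φ p) :
    pathSum vec w S p q = 0 := by
  have : {ω | IsNonnegPath vec S p q ω} = ∅ :=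
    Set.eq_empty_of_forall_notMem fun ω hω => by
      have := hω.add_mul_length_le φ hφ
      omega
  rw [pathSum, this, finsum_mem_empty]

lemma pathSum_self (φ : ℤ × ℤ →+ ℤ) (hφ : ∀ s ∈ S, 1 ≤ φ (vec s)) (hp : 0 ≤ p.2) :
    pathSum vec w S p p = 1 := by
  have : {ω | IsNonnegPath vec S p p ω} = {[]} := by
    ext ω
    refine ⟨fun hω => ?_, fun hω => by simp_all⟩
    have := hω.add_mul_length_le φ hφ
    simpa using List.length_eq_zero_iff.1 (by omega)
  rw [pathSum, this, finsum_mem_singleton, pathWt]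

lemma setOf_isNonnegPath_eq (hp : 0 ≤ p.2) :
    {ω | IsNonnegPath vec S p q ω} =
      (if p = q then {[]} else ∅) ∪
        ⋃ s ∈ (S : Set σ), List.cons s '' {ω | IsNonnegPath vec S (p + vec s) q ω} := by
  ext (_ | ⟨s, ω⟩) <;> split_ifs <;> simp_all [isNonnegPath_cons, and_comm]

lemma pathSum_eq_first_step (φ : ℤ × ℤ →+ ℤ) (hφ : ∀ s ∈ S, 1 ≤ φ (vec s)) (hp : 0 ≤ p.2) :
    pathSum vec w S p q =
      (if p = q then 1 else 0) + ∑ s ∈ S, w s p * pathSum vec w S (p + vec s) q := by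
  have hfin (r : ℤ × ℤ) := finite_setOf_isNonnegPath (p := r) (q := q) φ hφ
  have hdisj : (S : Set σ).PairwiseDisjoint
      fun s => List.cons s '' {ω | IsNonnegPath vec S (p + vec s) q ω} := by
    intro s _ t _ hst
    simp only [Function.onFun, Set.disjoint_left]
    rintro _ ⟨ω, -, rfl⟩ ⟨ω', -, h⟩
    exact hst (List.cons_eq_cons.1 h).1.symm
  rw [pathSum, setOf_isNonnegPath_eq hp, finsum_mem_union, finsum_mem_biUnion hdisj S.finite_toSet
    (fun s _ => (hfin _).image _), finsum_mem_coe_finset]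
  · congr 1
    · split_ifs <;> simp [pathWt]
    · refine Finset.sum_congr rfl fun s _ => ?_
      rw [finsum_mem_image List.cons_injective.injOn, pathSum, mul_finsum_mem]
      rfl
  · rw [Set.disjoint_left]
    split_ifs <;> simp
  · split_ifs <;> simp
  · exact Set.Finite.biUnion S.finite_toSet fun s _ => (hfin _).image _

lemma endPt_add (v : ℤ × ℤ) (ω : List σ) : endPt vec (p + v) ω = endPt vec p ω + v := by
  induction ω generalizing p with
  | nil => rfl
  | cons s ω ih => simp only [endPt, add_right_comm p v, ih]

lemma verts_add (v : ℤ × ℤ) (ω : List σ) :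
    verts vec (p + v) ω = (verts vec p ω).map (· + v) := by
  induction ω generalizing p with
  | nil => rfl
  | cons s ω ih => simp only [verts, add_right_comm p v, ih, List.map_cons]

lemma pathWt_add (v : ℤ × ℤ) (hw : ∀ s r, w s (r + v) = w s r) (ω : List σ) :
    pathWt vec w (p + v) ω = pathWt vec w p ω := by
  induction ω generalizing p with
  | nil => rfl
  | cons s ω ih => simp only [pathWt, add_right_comm p v, ih, hw]

lemma pathSum_add_add {v : ℤ × ℤ} (hv : v.2 = 0) (hw : ∀ s r, w s (r + v) = w s r) :
    pathSum vec w S (p + v) (q + v) = pathSum vec w S p q := by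
  have : {ω | IsNonnegPath vec S (p + v) (q + v) ω} = {ω | IsNonnegPath vec S p q ω} := by
    ext ω
    simp only [IsNonnegPath, verts_add, endPt_add, List.forall_mem_map, Prod.snd_add, hv,
      add_zero, add_left_inj]
  rw [pathSum, pathSum, this]
  exact finsum_mem_congr rfl fun ω _ => pathWt_add v hw ω

lemma pathSum_zero_mk_eq_first_step (φ : ℤ × ℤ →+ ℤ) (hφ : ∀ s ∈ S, 1 ≤ φ (vec s))
    (hw : ∀ s x x' t, w s (x, t) = w s (x', t)) {y : ℤ} (hy : 0 ≤ y) (E : ℤ) :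
    pathSum vec w S (0, y) (E, 0) =
      (if y = 0 ∧ E = 0 then 1 else 0) +
        ∑ s ∈ S, w s (0, y) * pathSum vec w S (0, y + (vec s).2) (E - (vec s).1, 0) := by
  rw [pathSum_eq_first_step φ hφ hy]
  congr 1
  · simp [Prod.ext_iff, eq_comm, and_comm]
  · refine Finset.sum_congr rfl fun s _ => ?_
    have hw' (t : σ) (r : ℤ × ℤ) : w t (r + ((vec s).1, 0)) = w t r := by
      rw [show r + ((vec s).1, 0) = (r.1 + (vec s).1, r.2) from Prod.ext rfl (add_zero _)]
      exact hw _ _ _ _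
    rw [← pathSum_add_add (p := (0, y + (vec s).2)) (q := (E - (vec s).1, 0)) rfl hw']
    congr 2 <;> ext <;> simp

end NonnegPath

section Schroder

open Finset

variable {K : Type*} [Field K] {ℓ : ℕ} {a : ℕ → ℕ → K}

noncomputable def schroderSum (ℓ : ℕ) (a : ℕ → ℕ → K) (y E : ℤ) : K :=
  pathSum (svec ℓ) (aWt a) (range (ℓ + 2)) (0, y) (E, 0)

noncomputable def dualSum (ℓ : ℕ) (a : ℕ → ℕ → K) (y E : ℤ) : K :=
  pathSum (dvec ℓ) (dWt ℓ a) (range (ℓ + 2)) (0, y) (E, 0)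

lemma finsum_isSchroder_eq_schroderSum (y E : ℤ) :
    ∑ᶠ ω ∈ {ω | IsSchroder ℓ (0, y) ω ∧ endPt (svec ℓ) (0, y) ω = (E, 0)},
      pathWt (svec ℓ) (aWt a) (0, y) ω = schroderSum ℓ a y E := by
  simp only [schroderSum, pathSum, IsSchroder, IsNonnegPath, mem_range, Nat.lt_succ_iff, and_assoc]

lemma finsum_isDualSchroder_eq_dualSum (y E : ℤ) :
    ∑ᶠ ω ∈ {ω | IsDualSchroder ℓ (0, y) ω ∧ endPt (dvec ℓ) (0, y) ω = (E, 0)},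
      pathWt (dvec ℓ) (dWt ℓ a) (0, y) ω = dualSum ℓ a y E := by
  simp only [dualSum, pathSum, IsDualSchroder, IsNonnegPath, mem_range, Nat.lt_succ_iff,
    and_assoc]

lemma wB_eq_schroderSum (n : ℤ) : wB ℓ a n = schroderSum ℓ a (n % ℓ) n :=
  finsum_isSchroder_eq_schroderSum _ _

lemma wD_eq_dualSum (n : ℤ) : wD ℓ a n = dualSum ℓ a ((-n) % ℓ) n :=
  finsum_isDualSchroder_eq_dualSum _ _

lemma svec_fst_add_snd_nonneg :
    ∀ s ∈ range (ℓ + 2), 0 ≤ (AddMonoidHom.fst ℤ ℤ + AddMonoidHom.snd ℤ ℤ) (svec ℓ s) := by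
  intro s _
  unfold svec
  split_ifs <;> simp only [AddMonoidHom.add_apply, AddMonoidHom.coe_fst, AddMonoidHom.coe_snd] <;>
    omega

lemma svec_two_fst_add_snd_pos (hℓ : 1 ≤ ℓ) :
    ∀ s ∈ range (ℓ + 2), 1 ≤ (2 • AddMonoidHom.fst ℤ ℤ + AddMonoidHom.snd ℤ ℤ) (svec ℓ s) := by
  intro s _
  unfold svec
  split_ifs <;> simp only [AddMonoidHom.add_apply, AddMonoidHom.smul_apply, AddMonoidHom.coe_fst,
    AddMonoidHom.coe_snd, nsmul_eq_mul, Nat.cast_ofNat] <;> omega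

lemma dvec_fst_add_snd_nonneg :
    ∀ s ∈ range (ℓ + 2),
      0 ≤ (AddMonoidHom.fst ℤ ℤ + ((ℓ : ℤ) - 1) • AddMonoidHom.snd ℤ ℤ) (dvec ℓ s) := by
  intro s _
  unfold dvec
  split_ifs <;> simp only [AddMonoidHom.add_apply, AddMonoidHom.smul_apply, AddMonoidHom.coe_fst,
    AddMonoidHom.coe_snd, smul_eq_mul] <;> nlinarith

lemma dvec_two_fst_sub_snd_pos (hℓ : 1 ≤ ℓ) :
    ∀ s ∈ range (ℓ + 2), 1 ≤ (2 • AddMonoidHom.fst ℤ ℤ - AddMonoidHom.snd ℤ ℤ) (dvec ℓ s) := by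
  intro s _
  unfold dvec
  split_ifs <;> simp only [AddMonoidHom.sub_apply, AddMonoidHom.smul_apply, AddMonoidHom.coe_fst,
    AddMonoidHom.coe_snd, nsmul_eq_mul, Nat.cast_ofNat] <;> omega

lemma schroderSum_of_neg {y : ℤ} (hy : y < 0) (E : ℤ) : schroderSum ℓ a y E = 0 :=
  pathSum_of_snd_neg hy

lemma schroderSum_eq_zero_of_lt {y E : ℤ} (h : E < y) : schroderSum ℓ a y E = 0 :=
  pathSum_eq_zero_of_lt _ svec_fst_add_snd_nonneg (by simpa using h)

lemma dualSum_of_neg {y : ℤ} (hy : y < 0) (E : ℤ) : dualSum ℓ a y E = 0 :=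
  pathSum_of_snd_neg hy

lemma dualSum_eq_zero_of_lt {y E : ℤ} (h : E < (ℓ - 1) * y) : dualSum ℓ a y E = 0 :=
  pathSum_eq_zero_of_lt _ dvec_fst_add_snd_nonneg (by simpa using h)

lemma dualSum_zero_zero (hℓ : 1 ≤ ℓ) : dualSum ℓ a 0 0 = 1 :=
  pathSum_self _ (dvec_two_fst_sub_snd_pos hℓ) le_rfl

lemma schroderSum_first_step (hℓ : 1 ≤ ℓ) (m : ℕ) (E : ℤ) :
    ∑ s ∈ range (ℓ + 1), aWt a s (0, m) * schroderSum ℓ a (m + ℓ - s) (E - s)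
        + a (ℓ + 1) m * schroderSum ℓ a (m - 1) (E - 1) =
      schroderSum ℓ a m E - if m = 0 ∧ E = 0 then 1 else 0 := by
  have hw (s : ℕ) (x x' t : ℤ) : aWt a s (x, t) = aWt a s (x', t) := rfl
  have h := pathSum_zero_mk_eq_first_step _ (svec_two_fst_add_snd_pos hℓ) hw (Nat.cast_nonneg m) E
  have hterm : ∀ s ∈ range (ℓ + 1),
      aWt a s (0, m) * pathSum (svec ℓ) (aWt a) (range (ℓ + 2)) (0, m + (svec ℓ s).2)
        (E - (svec ℓ s).1, 0) = aWt a s (0, m) * schroderSum ℓ a (m + ℓ - s) (E - s) := by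
    intro s hs
    rw [svec, if_pos (Nat.lt_succ_iff.1 (mem_range.1 hs)), ← add_sub_assoc]
    rfl
  have hlast : aWt a (ℓ + 1) (0, m) * pathSum (svec ℓ) (aWt a) (range (ℓ + 2))
      (0, m + (svec ℓ (ℓ + 1)).2) (E - (svec ℓ (ℓ + 1)).1, 0) =
        a (ℓ + 1) m * schroderSum ℓ a (m - 1) (E - 1) := by
    simp [svec, aWt, schroderSum, sub_eq_add_neg]
  rw [sum_range_succ, sum_congr rfl hterm, hlast] at h
  simp only [Nat.cast_eq_zero] at h
  change schroderSum ℓ a m E = _ at h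
  linear_combination -h

lemma schroderSum_diag (hℓ : 1 ≤ ℓ) (m : ℕ) :
    schroderSum ℓ a m m =
      (if m = 0 then 1 else 0) + a (ℓ + 1) m * schroderSum ℓ a (m - 1) (m - 1) := by
  have h := schroderSum_first_step (a := a) hℓ m m
  rw [sum_eq_zero fun s _ => by rw [schroderSum_eq_zero_of_lt (by omega), mul_zero], zero_add] at h
  simp only [Nat.cast_eq_zero, and_self] at h
  linear_combination -h

end Schroder

section Dual

open Finset

variable {K : Type*} [Field K] {ℓ : ℕ} {a : ℕ → ℕ → K}

lemma dualSum_first_step (hℓ : 1 ≤ ℓ) (m : ℕ) (E : ℤ) :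
    dualSum ℓ a m E = (if m = 0 ∧ E = 0 then 1 else 0)
      + ∑ s ∈ range ℓ, dWt ℓ a s (0, m) * dualSum ℓ a (m + ℓ - s) (E - ℓ + s)
      + dWt ℓ a ℓ (0, m) * dualSum ℓ a m (E - ℓ)
      + dWt ℓ a (ℓ + 1) (0, m) * dualSum ℓ a (m - 1) (E - ℓ + 1) := by
  have hw (s : ℕ) (x x' t : ℤ) : dWt ℓ a s (x, t) = dWt ℓ a s (x', t) := rfl
  have h := pathSum_zero_mk_eq_first_step _ (dvec_two_fst_sub_snd_pos hℓ) hw (Nat.cast_nonneg m) E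
  have hterm : ∀ s ∈ range ℓ,
      dWt ℓ a s (0, m) * pathSum (dvec ℓ) (dWt ℓ a) (range (ℓ + 2)) (0, m + (dvec ℓ s).2)
        (E - (dvec ℓ s).1, 0) = dWt ℓ a s (0, m) * dualSum ℓ a (m + ℓ - s) (E - ℓ + s) := by
    intro s hs
    simp only [dvec, if_pos (mem_range.1 hs), dualSum]
    ring_nf
  have hℓterm : pathSum (dvec ℓ) (dWt ℓ a) (range (ℓ + 2)) (0, m + (dvec ℓ ℓ).2)
      (E - (dvec ℓ ℓ).1, 0) = dualSum ℓ a m (E - ℓ) := by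
    simp [dvec, dualSum]
  have hlast : pathSum (dvec ℓ) (dWt ℓ a) (range (ℓ + 2)) (0, m + (dvec ℓ (ℓ + 1)).2)
      (E - (dvec ℓ (ℓ + 1)).1, 0) = dualSum ℓ a (m - 1) (E - ℓ + 1) := by
    simp only [dvec, dualSum, if_neg (show ¬ℓ + 1 < ℓ by omega), if_neg (show ℓ + 1 ≠ ℓ by omega)]
    ring_nf
  rw [sum_range_succ, sum_range_succ, sum_congr rfl hterm, hℓterm, hlast] at h
  simp only [Nat.cast_eq_zero] at h
  rw [← add_assoc, ← add_assoc] at h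
  exact h

lemma mul_dWt_of_lt {s : ℕ} (hs : s < ℓ) {q : ℤ × ℤ} (hq : a ℓ q.2.toNat ≠ 0) :
    a ℓ q.2.toNat * dWt ℓ a s q = -((-1) ^ (ℓ - s) * aWt a s q) := by
  have hsign : (-1 : K) ^ (ℓ + 1 + s) = -(-1) ^ (ℓ - s) := by
    rw [show ℓ + 1 + s = ℓ - s + 1 + 2 * s by omega, pow_add, pow_add, pow_mul]
    simp
  unfold dWt aWt
  rw [if_neg hs.ne]
  split_ifs with h0
  · subst h0
    rw [mul_one, ← hsign, add_zero]
    field_simp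
  · rw [hsign]
    field_simp

lemma mul_dWt_self (hℓ : 1 ≤ ℓ) {q : ℤ × ℤ} (hq : a ℓ q.2.toNat ≠ 0) :
    a ℓ q.2.toNat * dWt ℓ a ℓ q = 1 := by
  rw [dWt, if_neg (by omega), if_pos rfl]
  field_simp

lemma mul_dWt_succ {q : ℤ × ℤ} (hq : a ℓ q.2.toNat ≠ 0) :
    a ℓ q.2.toNat * dWt ℓ a (ℓ + 1) q = aWt a (ℓ + 1) q := by
  rw [dWt, if_neg (by omega), if_neg (by omega), aWt, if_neg (by omega),
    show ℓ + 1 + (ℓ + 1) = 2 * (ℓ + 1) by ring, pow_mul]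
  field_simp
  simp

noncomputable def signedDualSum (ℓ : ℕ) (a : ℕ → ℕ → K) (y E : ℤ) : K :=
  (-1) ^ y * dualSum ℓ a y E

lemma signedDualSum_first_step (hℓ : 1 ≤ ℓ) (haℓ : ∀ j, a ℓ j ≠ 0) (m : ℕ) (E : ℤ) :
    ∑ s ∈ range (ℓ + 1), aWt a s (0, m) * signedDualSum ℓ a (m + ℓ - s) (E - ℓ + s)
        + a (ℓ + 1) m * signedDualSum ℓ a (m - 1) (E - ℓ + 1) =
      signedDualSum ℓ a m (E - ℓ) + a ℓ m * if m = 0 ∧ E = 0 then 1 else 0 := by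
  have ha : a ℓ ((0 : ℤ), (m : ℤ)).2.toNat ≠ 0 := haℓ _
  have hterm : ∀ s ∈ range ℓ, aWt a s (0, m) * signedDualSum ℓ a (m + ℓ - s) (E - ℓ + s) =
      -((-1) ^ m * (a ℓ m * (dWt ℓ a s (0, m) * dualSum ℓ a (m + ℓ - s) (E - ℓ + s)))) := by
    intro s hs
    have hsgn : (-1 : K) ^ ((m : ℤ) + ℓ - s) = (-1) ^ m * (-1) ^ (ℓ - s) := by
      rw [show (m : ℤ) + ℓ - s = ((m + (ℓ - s) : ℕ) : ℤ) by
        push_cast [Nat.cast_sub (mem_range.1 hs).le]; ring, zpow_natCast, pow_add]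
    have hstep := mul_dWt_of_lt (mem_range.1 hs) ha
    rw [Int.toNat_natCast] at hstep
    rw [signedDualSum, hsgn, ← mul_assoc (a ℓ m), hstep]
    ring
  have hself := mul_dWt_self hℓ ha
  have hsucc := mul_dWt_succ ha
  have hδ : (-1 : K) ^ m * (if m = 0 ∧ E = 0 then 1 else 0) = if m = 0 ∧ E = 0 then 1 else 0 := by
    split_ifs with h
    · simp [h.1]
    · simp
  have haℓ' : aWt a ℓ ((0 : ℤ), (m : ℤ)) = a ℓ m := by
    rw [aWt, if_neg (by omega), Int.toNat_natCast]
  simp only [Int.toNat_natCast, aWt, if_neg (Nat.succ_ne_zero ℓ)] at hself hsucc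
  rw [sum_range_succ, sum_congr rfl hterm, sum_neg_distrib, haℓ', add_sub_cancel_right,
    sub_add_cancel, ← mul_sum, ← mul_sum]
  simp only [signedDualSum, zpow_natCast, zpow_sub_one₀ (by norm_num : (-1 : K) ≠ 0), inv_neg_one]
  linear_combination (a ℓ m * (-1) ^ m) * dualSum_first_step (a := a) hℓ m E
    + ((-1) ^ m * dualSum ℓ a m (E - ℓ)) * hself
    + ((-1) ^ m * dualSum ℓ a (m - 1) (E - ℓ + 1)) * hsucc + a ℓ m * hδ

end Dual

section Pairing

open Finset

variable {K : Type*} [Field K] {ℓ : ℕ} {a : ℕ → ℕ → K}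

/-- The recurrence of `P`, multiplied by `x^{-ℓ(k+1)}` and read through `(y, k) ↦ 𝓛[P_y x^{-ℓk}]`;
the summand `s` comes from the step `a_s`, which raises the height by `ℓ - s`. -/
def SatisfiesPairingRec (ℓ : ℕ) (a : ℕ → ℕ → K) (T : ℤ → ℤ → K) : Prop :=
  ∀ (m : ℕ) (k : ℤ), ∑ s ∈ range (ℓ + 1), aWt a s (0, m) * T (m + ℓ - s) (k + 1)
    + a (ℓ + 1) m * T (m - 1) k = T m k

lemma SatisfiesPairingRec.unique (hℓ : 1 ≤ ℓ) {T T' : ℤ → ℤ → K} (hT : SatisfiesPairingRec ℓ a T)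
    (hT' : SatisfiesPairingRec ℓ a T') (hbase : ∀ y : ℤ, y < ℓ → ∀ k, T y k = T' y k) :
    T = T' := by
  suffices h : ∀ n : ℕ, ∀ y : ℤ, y < ℓ + n → ∀ k, T y k = T' y k by
    funext y k
    exact h (y - ℓ + 1).toNat y (by omega) k
  intro n
  induction n with
  | zero => simpa using hbase
  | succ n ih =>
    intro y hy k
    rcases (show y < ℓ + n ∨ y = n + ℓ by omega) with hlt | rfl
    · exact ih y hlt k
    have hrec := hT n (k - 1)
    have hrec' := hT' n (k - 1)
    rw [sum_range_succ'] at hrec hrec'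
    have hsum : ∑ s ∈ range ℓ, aWt a (s + 1) (0, n) * T (n + ℓ - (s + 1 : ℕ)) (k - 1 + 1) =
        ∑ s ∈ range ℓ, aWt a (s + 1) (0, n) * T' (n + ℓ - (s + 1 : ℕ)) (k - 1 + 1) :=
      sum_congr rfl fun s _ => by rw [ih _ (by omega)]
    rw [hsum, ih n (by omega), ih (n - 1) (by omega)] at hrec
    simp only [aWt, if_pos, Nat.cast_zero, sub_zero, sub_add_cancel, one_mul] at hrec hrec'
    linear_combination hrec - hrec'

noncomputable def pathPairing (ℓ : ℕ) (a : ℕ → ℕ → K) (y k : ℤ) : K :=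
  if 0 ≤ k then signedDualSum ℓ a y (ℓ * k - y) else a ℓ 0 * schroderSum ℓ a y (y - ℓ * (k + 1))

lemma pathPairing_of_nonneg {k : ℤ} (hk : 0 ≤ k) (y : ℤ) :
    pathPairing ℓ a y k = signedDualSum ℓ a y (ℓ * k - y) :=
  if_pos hk

lemma pathPairing_of_neg {k : ℤ} (hk : k < 0) (y : ℤ) :
    pathPairing ℓ a y k = a ℓ 0 * schroderSum ℓ a y (y - ℓ * (k + 1)) :=
  if_neg hk.not_ge

lemma pathPairing_zero_right (hℓ : 1 ≤ ℓ) (y : ℤ) :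
    pathPairing ℓ a y 0 = if y = 0 then 1 else 0 := by
  rw [pathPairing_of_nonneg le_rfl, signedDualSum, mul_zero, zero_sub]
  split_ifs with hy
  · simp [hy, dualSum_zero_zero hℓ]
  · rcases lt_or_gt_of_ne hy with hneg | hpos
    · rw [dualSum_of_neg hneg, mul_zero]
    · rw [dualSum_eq_zero_of_lt (by nlinarith), mul_zero]

lemma pathPairing_satisfiesPairingRec (hℓ : 1 ≤ ℓ) (haℓ : ∀ j, a ℓ j ≠ 0) :
    SatisfiesPairingRec ℓ a (pathPairing ℓ a) := by
  intro m k
  rcases lt_trichotomy k (-1) with hk | rfl | hk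
  · have h := schroderSum_first_step (a := a) hℓ m (m - ℓ * (k + 1))
    rw [if_neg (by rintro ⟨-, h⟩; nlinarith), sub_zero] at h
    simp only [pathPairing_of_neg (show k < 0 by omega),
      pathPairing_of_neg (show k + 1 < 0 by omega)]
    have hargs (s : ℕ) : (m + ℓ - s : ℤ) - ℓ * (k + 1 + 1) = m - ℓ * (k + 1) - s := by ring
    simp only [hargs, show (m - 1 : ℤ) - ℓ * (k + 1) = m - ℓ * (k + 1) - 1 by ring]
    rw [← h, mul_add (a ℓ 0), mul_sum]
    congr 1
    · exact sum_congr rfl fun s _ => mul_left_comm _ _ _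
    · exact mul_left_comm _ _ _
  · rw [neg_add_cancel, pathPairing_of_neg (by norm_num), pathPairing_of_neg (by norm_num)]
    simp only [pathPairing_zero_right hℓ, neg_add_cancel, mul_zero, sub_zero]
    rw [sum_eq_single ℓ (fun s hs hsℓ => by rw [if_neg (by have := mem_range.1 hs; omega),
      mul_zero]) (by simp), add_sub_cancel_right, schroderSum_diag hℓ]
    have hδ : aWt a ℓ (0, m) * (if (m : ℤ) = 0 then 1 else 0) = a ℓ 0 * if m = 0 then 1 else 0 := by
      rcases eq_or_ne m 0 with rfl | hm
      · simp [aWt, show ℓ ≠ 0 by omega]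
      · simp [hm]
    linear_combination hδ
  · have h := signedDualSum_first_step hℓ haℓ m (ℓ * (k + 1) - m)
    have hpos : 0 < (ℓ : ℤ) * (k + 1) := mul_pos (by omega) (by omega)
    rw [if_neg (by omega), mul_zero, add_zero] at h
    simp only [pathPairing_of_nonneg (show 0 ≤ k by omega),
      pathPairing_of_nonneg (show 0 ≤ k + 1 by omega)]
    have hargs (s : ℕ) : (ℓ * (k + 1) - (m + ℓ - s) : ℤ) = ℓ * (k + 1) - m - ℓ + s := by ring
    simp only [hargs, show (ℓ * k - (m - 1) : ℤ) = ℓ * (k + 1) - m - ℓ + 1 by ring,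
      show (ℓ * k - m : ℤ) = ℓ * (k + 1) - m - ℓ by ring]
    exact h

lemma pathPairing_of_height_neg {y : ℤ} (hy : y < 0) (k : ℤ) : pathPairing ℓ a y k = 0 := by
  unfold pathPairing signedDualSum
  rw [dualSum_of_neg hy, schroderSum_of_neg hy]
  simp

lemma pathPairing_eq_combMoment (hℓ : 1 ≤ ℓ) {n : ℕ} (hn : n < ℓ) (k : ℤ) :
    pathPairing ℓ a n k = combMoment ℓ a (n - ℓ * k) := by
  have hℓ' : (1 : ℤ) ≤ ℓ := by exact_mod_cast hℓ
  have hmod (j : ℤ) : ((n : ℤ) + ℓ * j) % ℓ = n := by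
    rw [Int.add_mul_emod_self_left, Int.emod_eq_of_lt (by positivity) (by exact_mod_cast hn)]
  rcases lt_or_ge k 0 with hk | hk
  · rw [pathPairing_of_neg hk, combMoment, if_pos (by nlinarith), wB_eq_schroderSum,
      show (n : ℤ) - ℓ * k - ℓ = n + ℓ * (-k - 1) by ring, hmod]
    congr 2
    ring
  rcases le_or_gt ((n : ℤ) - ℓ * k) 0 with hle | hpos
  · rw [pathPairing_of_nonneg hk, combMoment, if_neg (by linarith), if_neg (by linarith),
      wD_eq_dualSum, neg_neg, show (n : ℤ) - ℓ * k = n + ℓ * (-k) by ring, hmod,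
      Int.toNat_natCast, signedDualSum, zpow_natCast]
    congr 2
    ring
  · obtain rfl : k = 0 := by nlinarith
    simp only [mul_zero, sub_zero] at hpos ⊢
    rw [pathPairing_zero_right hℓ, if_neg (by omega), combMoment, if_neg (by omega),
      if_pos (by omega)]

end Pairing

section Moments

open Finset Polynomial LaurentPolynomial

variable {K : Type*} [Field K] {ℓ : ℕ} {a : ℕ → ℕ → K} {P : ℕ → K[X]}

lemma SatisfiesRec.sum_range_eq (hℓ : 1 ≤ ℓ) (hrec : SatisfiesRec ℓ a P) (m : ℕ) :
    ∑ s ∈ range (ℓ + 1), Polynomial.C (aWt a s (0, m)) * P (m + ℓ - s)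
        + Polynomial.C (a (ℓ + 1) m) * X ^ ℓ * (if m = 0 then 0 else P (m - 1)) =
      X ^ ℓ * P m := by
  obtain ⟨l, rfl⟩ : ∃ l, ℓ = l + 1 := ⟨ℓ - 1, by omega⟩
  have h := hrec (m + (l + 1)) (by omega)
  simp only [add_eq_right, add_tsub_cancel_right] at h
  have hmid : ∀ i ∈ Icc 1 l, Polynomial.C (aWt a i (0, m)) * P (m + (l + 1) - i) =
      Polynomial.C (a i m) * P (m + (l + 1) - i) := fun i hi => by
    rw [aWt, if_neg (by rw [mem_Icc] at hi; omega), Int.toNat_natCast]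
  rw [sum_range_succ, sum_range_eq_add_Ico _ (by omega), Ico_add_one_right_eq_Icc,
    sum_congr rfl hmid]
  simp only [aWt, if_pos, if_neg (Nat.succ_ne_zero l), Int.toNat_natCast, map_one, one_mul,
    Nat.sub_zero, Nat.add_sub_cancel]
  linear_combination h

/-- `P` is extended by zero to negative indices, which encodes the convention `P_{-1} = 0`. -/
noncomputable def momentPairing (L : LaurentPolynomial K →ₗ[K] K) (P : ℕ → K[X]) (ℓ : ℕ)
    (y k : ℤ) : K :=
  L (toLaurent (Function.extend Nat.cast P 0 y) * T (-(ℓ : ℤ) * k))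

lemma momentPairing_natCast (L : LaurentPolynomial K →ₗ[K] K) (n : ℕ) (k : ℤ) :
    momentPairing L P ℓ n k = L (toLaurent (P n) * T (-(ℓ : ℤ) * k)) := by
  rw [momentPairing, Nat.cast_injective.extend_apply]

lemma momentPairing_of_height_neg (L : LaurentPolynomial K →ₗ[K] K) {y : ℤ} (hy : y < 0) (k : ℤ) :
    momentPairing L P ℓ y k = 0 := by
  rw [momentPairing, Function.extend_apply' _ _ _ (by rintro ⟨n, rfl⟩; omega)]
  simp

lemma momentPairing_satisfiesPairingRec (hℓ : 1 ≤ ℓ) (hrec : SatisfiesRec ℓ a P)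
    (L : LaurentPolynomial K →ₗ[K] K) : SatisfiesPairingRec ℓ a (momentPairing L P ℓ) := by
  intro m k
  have h := congrArg (fun p => L (toLaurent p * T (-(ℓ : ℤ) * (k + 1)))) (hrec.sum_range_eq hℓ m)
  have hX (Q : LaurentPolynomial K) :
      T ℓ * (Q * T (-(ℓ : ℤ) * (k + 1))) = Q * T (-(ℓ : ℤ) * k) := by
    rw [mul_left_comm, ← T_add]
    ring_nf
  simp only [map_add, map_sum, map_mul, toLaurent_C, toLaurent_X_pow, add_mul, sum_mul, mul_assoc,
    ← LaurentPolynomial.smul_eq_C_mul, smul_mul_assoc, hX, map_smul, smul_eq_mul] at h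
  have hterm : ∀ s ∈ range (ℓ + 1),
      momentPairing L P ℓ (m + ℓ - s) (k + 1) =
        L (toLaurent (P (m + ℓ - s)) * T (-(ℓ : ℤ) * (k + 1))) := by
    intro s hs
    rw [show (m + ℓ - s : ℤ) = ((m + ℓ - s : ℕ) : ℤ) by
      push_cast [Nat.cast_sub (show s ≤ m + ℓ by rw [mem_range] at hs; omega)]; ring,
      momentPairing_natCast]
  have hprev : momentPairing L P ℓ (m - 1) k =
      L (toLaurent (if m = 0 then 0 else P (m - 1)) * T (-(ℓ : ℤ) * k)) := by
    rcases m with _ | m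
    · simp [momentPairing_of_height_neg]
    · simp [momentPairing_natCast]
  rw [sum_congr rfl fun s hs => by rw [hterm s hs], hprev, momentPairing_natCast]
  exact h

lemma momentPairing_eq_combMoment (hinit : ∀ n : ℕ, n < ℓ → P n = X ^ n)
    (L : LaurentPolynomial K →ₗ[K] K) (hL : ∀ n : ℤ, L (T n) = combMoment ℓ a n) {n : ℕ}
    (hn : n < ℓ) (k : ℤ) : momentPairing L P ℓ n k = combMoment ℓ a (n - ℓ * k) := by
  rw [momentPairing_natCast, hinit n hn, toLaurent_X_pow, ← T_add, ← hL]
  ring_nf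

end Moments

theorem general_orthogonality_general {K : Type*} [Field K]
    (ℓ : ℕ) (hℓ : 1 ≤ ℓ) (a : ℕ → ℕ → K)
    (haℓ : ∀ j : ℕ, a ℓ j ≠ 0)
    (P : ℕ → Polynomial K)
    (hinit : ∀ n : ℕ, n < ℓ → P n = Polynomial.X ^ n)
    (hrec : SatisfiesRec ℓ a P)
    (L : LaurentPolynomial K →ₗ[K] K)
    (hL : ∀ n : ℤ, L (LaurentPolynomial.T n) = combMoment ℓ a n) :
    ∀ (n : ℕ) (k : ℤ),
      ((n : ℤ) ≤ k →
        L (Polynomial.toLaurent (P n) * LaurentPolynomial.T (-(ℓ : ℤ) * k)) =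
          (-1 : K) ^ n * ∑ᶠ ω ∈ {ω : List ℕ | IsDualSchroder ℓ (0, (n : ℤ)) ω ∧
            endPt (dvec ℓ) (0, (n : ℤ)) ω = ((ℓ : ℤ) * k - n, 0)},
            pathWt (dvec ℓ) (dWt ℓ a) (0, (n : ℤ)) ω) ∧
      (0 ≤ k → k ≤ (n : ℤ) - 1 →
        L (Polynomial.toLaurent (P n) * LaurentPolynomial.T (-(ℓ : ℤ) * k)) = 0) ∧
      (k < 0 →
        L (Polynomial.toLaurent (P n) * LaurentPolynomial.T (-(ℓ : ℤ) * k)) =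
          a ℓ 0 * ∑ᶠ ω ∈ {ω : List ℕ | IsSchroder ℓ (0, (n : ℤ)) ω ∧
            endPt (svec ℓ) (0, (n : ℤ)) ω = ((n : ℤ) - (ℓ : ℤ) * (k + 1), 0)},
            pathWt (svec ℓ) (aWt a) (0, (n : ℤ)) ω) := by
  have hpairing : momentPairing L P ℓ = pathPairing ℓ a := by
    refine (momentPairing_satisfiesPairingRec hℓ hrec L).unique hℓ
      (pathPairing_satisfiesPairingRec hℓ haℓ) fun y hy k => ?_
    rcases lt_or_ge y 0 with hneg | hnonneg
    · rw [momentPairing_of_height_neg L hneg, pathPairing_of_height_neg hneg]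
    · lift y to ℕ using hnonneg
      rw [momentPairing_eq_combMoment hinit L hL (by omega),
        pathPairing_eq_combMoment hℓ (by omega)]
  intro n k
  rw [← momentPairing_natCast, hpairing]
  refine ⟨fun hnk => ?_, fun hk hkn => ?_, fun hk => ?_⟩
  · rw [pathPairing_of_nonneg (by omega), signedDualSum, zpow_natCast,
      finsum_isDualSchroder_eq_dualSum]
  · rw [pathPairing_of_nonneg hk, signedDualSum, dualSum_eq_zero_of_lt (by nlinarith), mul_zero]
  · rw [pathPairing_of_neg hk, finsum_isSchroder_eq_schroderSum]

/-- **General orthogonality.** For the functional `L` given by the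
combinatorial moments and the primitive `ℓ`-LBPs `P`:
`L (P n · x^{-ℓk})` equals `(-1)^n` times the weighted sum over dual
`ℓ`-Schröder paths from `(0,n)` to `(ℓk - n, 0)` if `n ≤ k`; it vanishes for
`0 ≤ k ≤ n-1`; and it equals `a ℓ 0` times the weighted sum over
`ℓ`-Schröder paths from `(0,n)` to `(n - ℓ(k+1), 0)` if `k < 0`. -/
theorem general_orthogonality {K : Type*} [Field K]
    (ℓ : ℕ) (hℓ : 1 ≤ ℓ) (a : ℕ → ℕ → K)
    (haℓ : ∀ j : ℕ, a ℓ j ≠ 0) (haℓ1 : ∀ j : ℕ, a (ℓ + 1) j ≠ 0)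
    (P : ℕ → Polynomial K)
    (hinit : ∀ n : ℕ, n < ℓ → P n = Polynomial.X ^ n)
    (hrec : SatisfiesRec ℓ a P)
    (L : LaurentPolynomial K →ₗ[K] K)
    (hL : ∀ n : ℤ, L (LaurentPolynomial.T n) = combMoment ℓ a n) :
    ∀ (n : ℕ) (k : ℤ),
      ((n : ℤ) ≤ k →
        L (Polynomial.toLaurent (P n) * LaurentPolynomial.T (-(ℓ : ℤ) * k)) =
          (-1 : K) ^ n * ∑ᶠ ω ∈ {ω : List ℕ | IsDualSchroder ℓ (0, (n : ℤ)) ω ∧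
            endPt (dvec ℓ) (0, (n : ℤ)) ω = ((ℓ : ℤ) * k - n, 0)},
            pathWt (dvec ℓ) (dWt ℓ a) (0, (n : ℤ)) ω) ∧
      (0 ≤ k → k ≤ (n : ℤ) - 1 →
        L (Polynomial.toLaurent (P n) * LaurentPolynomial.T (-(ℓ : ℤ) * k)) = 0) ∧
      (k < 0 →
        L (Polynomial.toLaurent (P n) * LaurentPolynomial.T (-(ℓ : ℤ) * k)) =
          a ℓ 0 * ∑ᶠ ω ∈ {ω : List ℕ | IsSchroder ℓ (0, (n : ℤ)) ω ∧
            endPt (svec ℓ) (0, (n : ℤ)) ω = ((n : ℤ) - (ℓ : ℤ) * (k + 1), 0)},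
            pathWt (svec ℓ) (aWt a) (0, (n : ℤ)) ω) :=
  general_orthogonality_general ℓ hℓ a haℓ P hinit hrec L hL
end

section
/- For every integer n ≥ ℓ, the n-th ℓ-Narayana polynomial N_n is divisible in ℤ[a_1,…,a_{ℓ+1}] by the polynomial ∑_{i=0}^{ℓ} a_i·a_{ℓ+1}^{ℓ−i}, where a_0 := 1. -/
open scoped BigOperators

/-- The `n`-th `ℓ`-Narayana polynomial
`N n = ∑_{ω ∈ B n} ∏_{i=1}^{ℓ+1} a_i^{m_i(ω)} ∈ ℤ[a_1, …, a_{ℓ+1}]`,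
where `m_i(ω)` is the number of steps `a_i` in `ω` (the variable `a_i`
is `MvPolynomial.X i`). -/
noncomputable def NarayanaPoly (ℓ n : ℕ) : MvPolynomial ℕ ℤ :=
  ∑ᶠ ω ∈ BSet ℓ (n : ℤ),
    ∏ i ∈ Finset.Icc 1 (ℓ + 1), (MvPolynomial.X i : MvPolynomial ℕ ℤ) ^ ω.count i

/-- `∑_{i=0}^{ℓ} a_i · a_{ℓ+1}^{ℓ-i}` with `a_0 := 1`. -/
noncomputable def NarayanaFactor (ℓ : ℕ) : MvPolynomial ℕ ℤ :=
  ∑ i ∈ Finset.range (ℓ + 1),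
    (if i = 0 then 1 else MvPolynomial.X i) * (MvPolynomial.X (ℓ + 1)) ^ (ℓ - i)

/-! Each block `a_j a_{ℓ+1}^{ℓ-j}` (`j ≤ ℓ`) has the displacement `(ℓ, 0)` of `a_ℓ` and never
dips below its starting height, and the weights of these blocks add up to `NarayanaFactor ℓ`.
Hence in a path of `B_n` the first occurrence of a block may be replaced by any other block,
which partitions `B_n` into classes of total weight
`(weight of the prefix) · NarayanaFactor ℓ · (weight of the suffix)`.
Every path of `B_n` contains a block: otherwise it would consist of down steps `a_{ℓ+1}` only,
so it would start at height `n mod ℓ < ℓ ≤ n` and could not end at `(n, 0)`. -/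

section Walks

variable {σ : Type} (vec : σ → ℤ × ℤ)

theorem endPt_append (p : ℤ × ℤ) (l₁ l₂ : List σ) :
    endPt vec p (l₁ ++ l₂) = endPt vec (endPt vec p l₁) l₂ := by
  induction l₁ generalizing p with
  | nil => rfl
  | cons s t ih => exact ih _

theorem mem_verts_self (p : ℤ × ℤ) (l : List σ) : p ∈ verts vec p l := by
  cases l <;> simp [verts]

theorem forall_mem_verts_append {P : ℤ × ℤ → Prop} (p : ℤ × ℤ) (l₁ l₂ : List σ) :
    (∀ q ∈ verts vec p (l₁ ++ l₂), P q) ↔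
      (∀ q ∈ verts vec p l₁, P q) ∧ ∀ q ∈ verts vec (endPt vec p l₁) l₂, P q := by
  induction l₁ generalizing p with
  | nil =>
    simp only [List.nil_append, verts, endPt, List.mem_singleton, forall_eq]
    exact ⟨fun h => ⟨h p (mem_verts_self vec p l₂), h⟩, fun h => h.2⟩
  | cons s t ih => simp only [List.cons_append, verts, endPt, List.forall_mem_cons, ih, and_assoc]

end Walks

section Schroder

variable {ℓ : ℕ}

theorem svec_of_le {i : ℕ} (h : i ≤ ℓ) : svec ℓ i = ((i : ℤ), (ℓ : ℤ) - i) := if_pos h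

theorem svec_succ_self : svec ℓ (ℓ + 1) = (1, -1) := if_neg (by omega)

theorem isSchroder_nil {p : ℤ × ℤ} : IsSchroder ℓ p [] ↔ 0 ≤ p.2 := by
  simp [IsSchroder, verts]

theorem isSchroder_cons {p : ℤ × ℤ} {s : ℕ} {t : List ℕ} :
    IsSchroder ℓ p (s :: t) ↔ s ≤ ℓ + 1 ∧ 0 ≤ p.2 ∧ IsSchroder ℓ (p + svec ℓ s) t := by
  simp only [IsSchroder, verts, List.forall_mem_cons]
  tauto

theorem IsSchroder.nonneg {p : ℤ × ℤ} {ω : List ℕ} (h : IsSchroder ℓ p ω) : 0 ≤ p.2 :=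
  h.2 p (mem_verts_self _ p ω)

theorem isSchroder_append {p : ℤ × ℤ} {l₁ l₂ : List ℕ} :
    IsSchroder ℓ p (l₁ ++ l₂) ↔
      IsSchroder ℓ p l₁ ∧ IsSchroder ℓ (endPt (svec ℓ) p l₁) l₂ := by
  simp only [IsSchroder, List.forall_mem_append, forall_mem_verts_append]
  tauto

theorem endPt_replicate (p : ℤ × ℤ) (m : ℕ) :
    endPt (svec ℓ) p (List.replicate m (ℓ + 1)) = (p.1 + m, p.2 - m) := by
  induction m generalizing p with
  | zero => simp [endPt]
  | succ m ih =>
    rw [List.replicate_succ, endPt, ih, svec_succ_self]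
    simp only [Prod.fst_add, Prod.snd_add, Prod.mk.injEq]
    push_cast
    constructor <;> ring

theorem isSchroder_replicate {p : ℤ × ℤ} {m : ℕ} :
    IsSchroder ℓ p (List.replicate m (ℓ + 1)) ↔ (m : ℤ) ≤ p.2 := by
  induction m generalizing p with
  | zero => simp [isSchroder_nil]
  | succ m ih =>
    rw [List.replicate_succ, isSchroder_cons, ih, svec_succ_self]
    simp only [Prod.snd_add]
    push_cast
    omega

def schroderBlock (ℓ j : ℕ) : List ℕ := j :: List.replicate (ℓ - j) (ℓ + 1)

theorem endPt_schroderBlock {j : ℕ} (hj : j ≤ ℓ) (p : ℤ × ℤ) :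
    endPt (svec ℓ) p (schroderBlock ℓ j) = (p.1 + ℓ, p.2) := by
  rw [schroderBlock, endPt, endPt_replicate, svec_of_le hj]
  simp only [Prod.fst_add, Prod.snd_add, Prod.mk.injEq]
  push_cast [Nat.cast_sub hj]
  constructor <;> ring

theorem isSchroder_schroderBlock {j : ℕ} (hj : j ≤ ℓ) {p : ℤ × ℤ} :
    IsSchroder ℓ p (schroderBlock ℓ j) ↔ 0 ≤ p.2 := by
  rw [schroderBlock, isSchroder_cons, isSchroder_replicate, svec_of_le hj]
  simp only [Prod.snd_add]
  push_cast [Nat.cast_sub hj]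
  omega

theorem append_schroderBlock_append_mem_BSet {n : ℤ} {u v : List ℕ} {i j : ℕ}
    (hi : i ≤ ℓ) (hj : j ≤ ℓ) (h : u ++ schroderBlock ℓ i ++ v ∈ BSet ℓ n) :
    u ++ schroderBlock ℓ j ++ v ∈ BSet ℓ n := by
  simp only [BSet, Set.mem_ofPred_eq, isSchroder_append, endPt_append,
    isSchroder_schroderBlock hi, isSchroder_schroderBlock hj, endPt_schroderBlock hi,
    endPt_schroderBlock hj] at h ⊢
  exact h

end Schroder

theorem List.replicate_prefix_append_cons_iff {α : Type*} {a x : α} (hx : x ≠ a) {m : ℕ}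
    {u w : List α} : List.replicate m a <+: u ++ x :: w ↔ List.replicate m a <+: u := by
  refine ⟨fun h => ?_, fun h => h.trans (List.prefix_append _ _)⟩
  induction m generalizing u with
  | zero => exact List.nil_prefix
  | succ m ih =>
    rw [List.replicate_succ] at h ⊢
    cases u with
    | nil => exact absurd (List.cons_prefix_cons.mp h).1.symm hx
    | cons y u =>
      obtain ⟨rfl, hu⟩ := List.cons_prefix_cons.mp h
      exact List.cons_prefix_cons.mpr ⟨rfl, ih hu⟩

section FirstBlock

variable {ℓ : ℕ}

/-- `some (u, v)` when `ω = u ++ schroderBlock ℓ j ++ v` with the block starting as early as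
possible, `none` when `ω` contains no block. -/
def firstBlock (ℓ : ℕ) : List ℕ → Option (List ℕ × List ℕ)
  | [] => none
  | s :: t =>
    if s ≤ ℓ ∧ List.replicate (ℓ - s) (ℓ + 1) <+: t then some ([], t.drop (ℓ - s))
    else (firstBlock ℓ t).map (Prod.map (s :: ·) id)

theorem eq_of_firstBlock_eq_some {ω u v : List ℕ} (h : firstBlock ℓ ω = some (u, v)) :
    ∃ j ≤ ℓ, ω = u ++ schroderBlock ℓ j ++ v := by
  induction ω generalizing u with
  | nil => simp [firstBlock] at h
  | cons s t ih =>
    rw [firstBlock] at h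
    split_ifs at h with hblock
    · obtain ⟨hs, r, rfl⟩ := hblock
      obtain ⟨rfl, rfl⟩ := Prod.mk.inj (Option.some.inj h)
      exact ⟨s, hs, by simp [schroderBlock, List.drop_left' List.length_replicate]⟩
    · obtain ⟨⟨u', v'⟩, ht, huv⟩ := Option.map_eq_some_iff.mp h
      obtain ⟨rfl, rfl⟩ := Prod.mk.inj huv
      obtain ⟨j, hj, rfl⟩ := ih ht
      exact ⟨j, hj, rfl⟩

/-- A block starts with a step other than `a_{ℓ+1}`, so exchanging it for another block
cannot create a block starting further to the left. -/
theorem firstBlock_append_schroderBlock_append {u v : List ℕ} {i j : ℕ} (hi : i ≤ ℓ)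
    (hj : j ≤ ℓ) (h : firstBlock ℓ (u ++ schroderBlock ℓ i ++ v) = some (u, v)) :
    firstBlock ℓ (u ++ schroderBlock ℓ j ++ v) = some (u, v) := by
  induction u with
  | nil =>
    have hblock : j ≤ ℓ ∧ List.replicate (ℓ - j) (ℓ + 1) <+: List.replicate (ℓ - j) (ℓ + 1) ++ v :=
      ⟨hj, List.prefix_append _ _⟩
    simp only [List.nil_append, schroderBlock, List.cons_append, firstBlock, if_pos hblock,
      List.drop_left' List.length_replicate]
  | cons s u ih =>
    have hstart : ∀ k ≤ ℓ, List.replicate (ℓ - s) (ℓ + 1) <+: u ++ schroderBlock ℓ k ++ v ↔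
        List.replicate (ℓ - s) (ℓ + 1) <+: u := by
      intro k hk
      rw [schroderBlock, List.append_assoc, List.cons_append,
        List.replicate_prefix_append_cons_iff (by omega)]
    simp only [List.cons_append, firstBlock, hstart i hi, hstart j hj] at h ⊢
    split_ifs at h ⊢ with hblock
    · simp at h
    · obtain ⟨⟨u', v'⟩, hrest, huv⟩ := Option.map_eq_some_iff.mp h
      simp only [Prod.map_apply, id_eq, Prod.mk.injEq, List.cons.injEq, true_and] at huv
      obtain ⟨rfl, rfl⟩ := huv
      rw [ih hrest]
      rfl

theorem eq_replicate_of_firstBlock_eq_none {ω : List ℕ} {p : ℤ × ℤ}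
    (h : firstBlock ℓ ω = none) (hS : IsSchroder ℓ p ω) (hE : (endPt (svec ℓ) p ω).2 = 0) :
    ω = List.replicate p.2.toNat (ℓ + 1) := by
  induction ω generalizing p with
  | nil =>
    change p.2 = 0 at hE
    simp [hE]
  | cons s t ih =>
    rw [firstBlock] at h
    split_ifs at h with hblock
    obtain ⟨hs, hp, hSt⟩ := isSchroder_cons.mp hS
    have ht := ih (Option.map_eq_none_iff.mp h) hSt hE
    rcases Nat.lt_or_ge ℓ s with hsl | hsl
    · obtain rfl : s = ℓ + 1 := by omega
      have hpos := hSt.nonneg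
      rw [svec_succ_self] at ht hpos
      simp only [Prod.snd_add] at ht hpos
      rw [ht, ← List.replicate_succ]
      congr 1
      omega
    · refine absurd ⟨hsl, ?_⟩ hblock
      rw [ht, svec_of_le hsl, Prod.snd_add,
        ← Nat.add_sub_cancel' (show ℓ - s ≤ (p.2 + ((ℓ : ℤ) - s)).toNat by omega),
        List.replicate_add]
      exact List.prefix_append _ _

theorem firstBlock_ne_none_of_mem_BSet (hℓ : 1 ≤ ℓ) {n : ℤ} (hn : (ℓ : ℤ) ≤ n) {ω : List ℕ}
    (h : ω ∈ BSet ℓ n) : firstBlock ℓ ω ≠ none := by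
  intro hnone
  obtain ⟨hS, hE⟩ := h
  have hω := eq_replicate_of_firstBlock_eq_none hnone hS (by rw [hE])
  rw [hω, endPt_replicate, Prod.mk.injEq] at hE
  have hlt : n % ℓ < ℓ := Int.emod_lt_of_pos n (by omega)
  have hnonneg : 0 ≤ n % ℓ := Int.emod_nonneg n (by omega)
  simp only at hE
  omega

end FirstBlock

section Weight

open MvPolynomial

variable {ℓ : ℕ}

/-- The summand of `NarayanaPoly ℓ n`; the step `a_0` has weight `1`. -/
noncomputable def schroderWeight (ℓ : ℕ) (ω : List ℕ) : MvPolynomial ℕ ℤ :=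
  ∏ i ∈ Finset.Icc 1 (ℓ + 1), (X i : MvPolynomial ℕ ℤ) ^ ω.count i

theorem schroderWeight_ne_zero (ω : List ℕ) : schroderWeight ℓ ω ≠ 0 :=
  Finset.prod_ne_zero_iff.mpr fun i _ => pow_ne_zero _ (X_ne_zero i)

theorem schroderWeight_append (u v : List ℕ) :
    schroderWeight ℓ (u ++ v) = schroderWeight ℓ u * schroderWeight ℓ v := by
  simp only [schroderWeight, List.count_append, pow_add, Finset.prod_mul_distrib]

theorem schroderWeight_replicate (m a : ℕ) :
    schroderWeight ℓ (List.replicate m a) = if a ∈ Finset.Icc 1 (ℓ + 1) then X a ^ m else 1 := by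
  rw [schroderWeight, ← Finset.prod_ite_eq' _ a (X · ^ m)]
  refine Finset.prod_congr rfl fun i _ => ?_
  rw [List.count_replicate]
  rcases eq_or_ne i a with rfl | hia
  · simp
  · simp [hia, hia.symm]

theorem sum_schroderWeight_schroderBlock :
    ∑ j ∈ Finset.range (ℓ + 1), schroderWeight ℓ (schroderBlock ℓ j) = NarayanaFactor ℓ := by
  refine Finset.sum_congr rfl fun j hj => ?_
  rw [Finset.mem_range] at hj
  rw [schroderBlock, ← List.singleton_append, schroderWeight_append, ← List.replicate_one,
    schroderWeight_replicate, schroderWeight_replicate]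
  rcases Nat.eq_zero_or_pos j with rfl | hj0
  · simp
  · simp [Finset.mem_Icc, hj0.ne', show j ≤ ℓ + 1 by omega, Nat.one_le_iff_ne_zero]

theorem narayanaFactor_dvd_sum_schroderWeight (S : Finset (List ℕ))
    (hne : ∀ ω ∈ S, firstBlock ℓ ω ≠ none)
    (hswap : ∀ ω ∈ S, ∀ u v j, firstBlock ℓ ω = some (u, v) → j ≤ ℓ →
      u ++ schroderBlock ℓ j ++ v ∈ S) :
    NarayanaFactor ℓ ∣ ∑ ω ∈ S, schroderWeight ℓ ω := by
  classical
  rw [← Finset.sum_fiberwise_of_maps_to fun ω hω => Finset.mem_image_of_mem (firstBlock ℓ) hω]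
  refine Finset.dvd_sum fun k hk => ?_
  obtain ⟨ω, hω, rfl⟩ := Finset.mem_image.mp hk
  obtain ⟨⟨u, v⟩, huv⟩ := Option.ne_none_iff_exists'.mp (hne ω hω)
  obtain ⟨i, hi, rfl⟩ := eq_of_firstBlock_eq_some huv
  have hfiber : {ω' ∈ S | firstBlock ℓ ω' = firstBlock ℓ (u ++ schroderBlock ℓ i ++ v)} =
      (Finset.range (ℓ + 1)).image (fun j => u ++ schroderBlock ℓ j ++ v) := by
    ext ω'
    simp only [Finset.mem_filter, Finset.mem_image, Finset.mem_range, huv]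
    constructor
    · rintro ⟨-, hω'⟩
      obtain ⟨j, hj, rfl⟩ := eq_of_firstBlock_eq_some hω'
      exact ⟨j, by omega, rfl⟩
    · rintro ⟨j, hj, rfl⟩
      exact ⟨hswap _ hω u v j huv (by omega),
        firstBlock_append_schroderBlock_append hi (by omega) huv⟩
  have hinj : Set.InjOn (fun j => u ++ schroderBlock ℓ j ++ v) ↑(Finset.range (ℓ + 1)) := by
    intro j _ j' _ h
    simp only [schroderBlock, List.append_assoc, List.cons_append, List.append_cancel_left_eq,
      List.cons.injEq] at h
    exact h.1
  rw [hfiber, Finset.sum_image hinj]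
  simp only [schroderWeight_append, ← Finset.sum_mul, ← Finset.mul_sum,
    sum_schroderWeight_schroderBlock]
  exact (dvd_mul_left _ _).mul_right _

end Weight

/-- For every `n ≥ ℓ`, the `n`-th `ℓ`-Narayana polynomial is divisible by
`∑_{i=0}^{ℓ} a_i · a_{ℓ+1}^{ℓ-i}` (with `a_0 := 1`). -/
theorem narayanaFactor_dvd_narayanaPoly (ℓ : ℕ) (hℓ : 1 ≤ ℓ)
    (n : ℕ) (hn : ℓ ≤ n) :
    NarayanaFactor ℓ ∣ NarayanaPoly ℓ n := by
  change NarayanaFactor ℓ ∣ ∑ᶠ ω ∈ BSet ℓ n, schroderWeight ℓ ω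
  by_cases hfin : (BSet ℓ n ∩ Function.support (schroderWeight ℓ)).Finite
  · have hmem : ∀ ω ∈ hfin.toFinset, ω ∈ BSet ℓ n := fun ω hω => (hfin.mem_toFinset.mp hω).1
    rw [finsum_mem_eq_sum _ hfin]
    refine narayanaFactor_dvd_sum_schroderWeight _
      (fun ω hω => firstBlock_ne_none_of_mem_BSet hℓ (by exact_mod_cast hn) (hmem ω hω))
      fun ω hω u v j huv hj => ?_
    obtain ⟨i, hi, rfl⟩ := eq_of_firstBlock_eq_some huv
    exact hfin.mem_toFinset.mpr
      ⟨append_schroderBlock_append_mem_BSet hi hj (hmem _ hω), schroderWeight_ne_zero _⟩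
  · rw [finsum_mem_eq_zero_of_infinite hfin]
    exact dvd_zero _
end
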